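/- arXiv:2209.03925 — 9 statements merged into one kernel-verified Lean document; each statement's English description precedes it below -/
import Mathlib

section
/- There is a one-to-one correspondence (bijection) between the set of multisets of size n with elements in Z/nZ whose sum is congruent to n(n-1)/2 modulo n, and the set of n-element subsets of {1, 2, ..., 2n-1} whose element sum is divisible by n. -/
/-!
Sort a multiset of residues as `b₀ ≤ b₁ ≤ ⋯ ≤ b_{n-1}` with `bᵢ ∈ {0, …, n-1}`. Then
`aᵢ = bᵢ + (i + 1)` is strictly increasing with values in `[1, 2n-1]`, and every such
sequence arises exactly once, via `bᵢ = aᵢ - (i + 1)`. The shift adds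
`binom(n+1, 2) = binom(n, 2) + n` to the sum, and `2 binom(n, 2) = n(n-1) ≡ 0 (mod n)`,
so `∑ bᵢ ≡ binom(n, 2)` exactly when `n ∣ ∑ aᵢ`.
-/

namespace EGZ

def shiftUp (l : List ℕ) : List ℕ := l.mapIdx fun i x => x + (i + 1)

def shiftDown (l : List ℕ) : List ℕ := l.mapIdx fun i x => x - (i + 1)

variable {l : List ℕ}

@[simp] lemma length_shiftUp : (shiftUp l).length = l.length := List.length_mapIdx

@[simp] lemma length_shiftDown : (shiftDown l).length = l.length := List.length_mapIdx

@[simp] lemma getElem_shiftUp {i : ℕ} (h : i < (shiftUp l).length) :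
    (shiftUp l)[i] = l[i]'(by simpa using h) + (i + 1) := List.getElem_mapIdx

@[simp] lemma getElem_shiftDown {i : ℕ} (h : i < (shiftDown l).length) :
    (shiftDown l)[i] = l[i]'(by simpa using h) - (i + 1) := List.getElem_mapIdx

lemma shiftDown_shiftUp (l : List ℕ) : shiftDown (shiftUp l) = l :=
  List.ext_getElem (by simp) fun _ _ _ => by simp

lemma sum_shiftUp (l : List ℕ) : (shiftUp l).sum = l.sum + (l.length + 1).choose 2 := by
  induction l using List.reverseRecOn with
  | nil => rfl
  | append_singleton l x ih =>
    rw [shiftUp, List.mapIdx_concat, List.sum_append, ← shiftUp, ih]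
    simp only [List.sum_append, List.sum_singleton, List.length_append, List.length_singleton,
      Nat.choose_succ_succ' (l.length + 1), Nat.choose_one_right]
    ring

lemma pairwise_lt_shiftUp (hl : l.Pairwise (· ≤ ·)) : (shiftUp l).Pairwise (· < ·) := by
  refine List.pairwise_iff_getElem.mpr fun i j hi hj hij => ?_
  have := List.pairwise_iff_getElem.mp hl i j (by simpa using hi) (by simpa using hj) hij
  simp only [getElem_shiftUp]
  omega

lemma getElem_add_sub_le_of_pairwise_lt (hl : l.Pairwise (· < ·)) {i j : ℕ} (hij : i ≤ j)
    (hj : j < l.length) : l[i] + (j - i) ≤ l[j] := by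
  induction j, hij using Nat.le_induction with
  | base => simp
  | succ j hij ih =>
    have := List.pairwise_iff_getElem.mp hl j (j + 1) (by omega) hj (by omega)
    have := ih (by omega)
    omega

lemma pairwise_le_shiftDown (hl : l.Pairwise (· < ·)) : (shiftDown l).Pairwise (· ≤ ·) := by
  refine List.pairwise_iff_getElem.mpr fun i j hi hj hij => ?_
  have := getElem_add_sub_le_of_pairwise_lt hl hij.le (by simpa using hj)
  simp only [getElem_shiftDown]
  omega

lemma add_one_le_getElem_of_pairwise_lt (hl : l.Pairwise (· < ·)) (hpos : ∀ x ∈ l, 0 < x)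
    {i : ℕ} (hi : i < l.length) : i + 1 ≤ l[i] := by
  have := getElem_add_sub_le_of_pairwise_lt hl (Nat.zero_le i) hi
  have := hpos _ (List.getElem_mem (n := 0) (by omega))
  omega

lemma shiftUp_shiftDown (hl : l.Pairwise (· < ·)) (hpos : ∀ x ∈ l, 0 < x) :
    shiftUp (shiftDown l) = l := by
  refine List.ext_getElem (by simp) fun i hi _ => ?_
  simp only [length_shiftUp, length_shiftDown] at hi
  have := add_one_le_getElem_of_pairwise_lt hl hpos hi
  simp only [getElem_shiftUp, getElem_shiftDown]
  omega

lemma pos_and_lt_of_mem_shiftUp {m : ℕ} (hl : ∀ x ∈ l, x < m) :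
    ∀ y ∈ shiftUp l, 0 < y ∧ y < m + l.length := by
  intro y hy
  obtain ⟨i, hi, rfl⟩ := List.mem_iff_getElem.mp hy
  have := hl _ (List.getElem_mem (l := l) (by simpa using hi))
  simp only [getElem_shiftUp, length_shiftUp] at hi ⊢
  omega

lemma lt_of_mem_shiftDown {m : ℕ} (hl : l.Pairwise (· < ·)) (hpos : ∀ x ∈ l, 0 < x)
    (hlt : ∀ x ∈ l, x < m + l.length) : ∀ y ∈ shiftDown l, y < m := by
  intro y hy
  obtain ⟨i, hi, rfl⟩ := List.mem_iff_getElem.mp hy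
  simp only [length_shiftDown] at hi
  have := getElem_add_sub_le_of_pairwise_lt hl (j := l.length - 1) (i := i) (by omega) (by omega)
  have := hlt _ (List.getElem_mem (n := l.length - 1) (by omega))
  have := add_one_le_getElem_of_pairwise_lt hl hpos hi
  simp only [getElem_shiftDown]
  omega

lemma natCast_eq_choose_two_iff_dvd {n s : ℕ} :
    (s : ZMod n) = n.choose 2 ↔ n ∣ s + (n + 1).choose 2 := by
  have hsucc : (n + 1).choose 2 = n.choose 2 + n := by
    rw [Nat.choose_succ_succ', Nat.choose_one_right, add_comm]
  have htwice : ((n.choose 2 : ℕ) : ZMod n) + (n.choose 2 : ℕ) = 0 := by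
    rw [← Nat.cast_add, ← two_mul, Nat.choose_two_right,
      Nat.mul_div_cancel' (Nat.even_mul_pred_self n).two_dvd, ZMod.natCast_eq_zero_iff]
    exact dvd_mul_right n _
  rw [← ZMod.natCast_eq_zero_iff, hsucc]
  push_cast [ZMod.natCast_self]
  constructor
  · intro h; linear_combination h + htwice
  · intro h; linear_combination h - htwice

variable {n : ℕ}

def sortedVals (M : Multiset (ZMod n)) : List ℕ := (M.map ZMod.val).sort (· ≤ ·)

lemma length_sortedVals (M : Multiset (ZMod n)) : (sortedVals M).length = M.card := by
  simp [sortedVals]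

lemma pairwise_le_sortedVals (M : Multiset (ZMod n)) : (sortedVals M).Pairwise (· ≤ ·) :=
  Multiset.pairwise_sort _ _

lemma lt_of_mem_sortedVals [NeZero n] {M : Multiset (ZMod n)} : ∀ x ∈ sortedVals M, x < n := by
  intro x hx
  obtain ⟨a, -, rfl⟩ := Multiset.mem_map.mp ((Multiset.mem_sort _).mp hx)
  exact ZMod.val_lt a

lemma map_natCast_sortedVals [NeZero n] (M : Multiset (ZMod n)) :
    (sortedVals M : Multiset ℕ).map (Nat.cast : ℕ → ZMod n) = M := by
  rw [sortedVals, Multiset.sort_eq, Multiset.map_map]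
  exact (Multiset.map_congr rfl fun a _ => ZMod.natCast_zmod_val a).trans M.map_id

lemma natCast_sum_sortedVals [NeZero n] (M : Multiset (ZMod n)) :
    ((sortedVals M).sum : ZMod n) = M.sum := by
  conv_rhs => rw [← map_natCast_sortedVals M]
  rw [Multiset.map_coe, Multiset.sum_coe, Nat.cast_list_sum]

lemma nodup_shiftUp_sortedVals (M : Multiset (ZMod n)) : (shiftUp (sortedVals M)).Nodup :=
  (pairwise_lt_shiftUp (pairwise_le_sortedVals M)).imp ne_of_lt

def toSubset (M : Multiset (ZMod n)) : Finset ℕ := (shiftUp (sortedVals M)).toFinset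

def ofSubset (n : ℕ) (A : Finset ℕ) : Multiset (ZMod n) :=
  (shiftDown (A.sort (· ≤ ·)) : Multiset ℕ).map (↑)

lemma sort_toSubset (M : Multiset (ZMod n)) :
    (toSubset M).sort (· ≤ ·) = shiftUp (sortedVals M) :=
  (List.toFinset_sort _ (nodup_shiftUp_sortedVals M)).mpr
    ((pairwise_lt_shiftUp (pairwise_le_sortedVals M)).imp le_of_lt)

lemma card_toSubset (M : Multiset (ZMod n)) : (toSubset M).card = M.card := by
  rw [toSubset, List.toFinset_card_of_nodup (nodup_shiftUp_sortedVals M), length_shiftUp,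
    length_sortedVals]

lemma toSubset_subset_Icc [NeZero n] {M : Multiset (ZMod n)} (hM : M.card = n) :
    toSubset M ⊆ Finset.Icc 1 (2 * n - 1) := by
  intro y hy
  have := pos_and_lt_of_mem_shiftUp lt_of_mem_sortedVals y (List.mem_toFinset.mp hy)
  rw [length_sortedVals, hM] at this
  rw [Finset.mem_Icc]
  omega

lemma dvd_sum_toSubset [NeZero n] {M : Multiset (ZMod n)} (hM : M.card = n)
    (hsum : M.sum = n.choose 2) : n ∣ ∑ a ∈ toSubset M, a := by
  rw [toSubset, List.sum_toFinset _ (nodup_shiftUp_sortedVals M), List.map_id', sum_shiftUp,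
    length_sortedVals, hM, ← natCast_eq_choose_two_iff_dvd, natCast_sum_sortedVals, hsum]

lemma ofSubset_toSubset [NeZero n] (M : Multiset (ZMod n)) : ofSubset n (toSubset M) = M := by
  rw [ofSubset, sort_toSubset, shiftDown_shiftUp, map_natCast_sortedVals]

lemma card_ofSubset (A : Finset ℕ) : (ofSubset n A).card = A.card := by
  simp [ofSubset]

section Subset

variable {A : Finset ℕ} (hA : A ⊆ Finset.Icc 1 (2 * n - 1)) (hcard : A.card = n)
include hA hcard

lemma pos_and_lt_of_mem_sort : ∀ x ∈ A.sort (· ≤ ·), 0 < x ∧ x < n + (A.sort (· ≤ ·)).length := by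
  intro x hx
  have := Finset.mem_Icc.mp (hA ((Finset.mem_sort _).mp hx))
  rw [Finset.length_sort, hcard]
  omega

lemma shiftUp_shiftDown_sort : shiftUp (shiftDown (A.sort (· ≤ ·))) = A.sort (· ≤ ·) :=
  shiftUp_shiftDown (Finset.sortedLT_sort A).pairwise fun x hx =>
    (pos_and_lt_of_mem_sort hA hcard x hx).1

lemma sortedVals_ofSubset [NeZero n] :
    sortedVals (ofSubset n A) = shiftDown (A.sort (· ≤ ·)) := by
  have hsorted := (Finset.sortedLT_sort A).pairwise
  have hlt : ∀ y ∈ shiftDown (A.sort (· ≤ ·)), y < n :=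
    lt_of_mem_shiftDown hsorted (fun x hx => (pos_and_lt_of_mem_sort hA hcard x hx).1)
      fun x hx => (pos_and_lt_of_mem_sort hA hcard x hx).2
  rw [sortedVals, ofSubset, Multiset.map_map,
    Multiset.map_congr (f := ZMod.val ∘ Nat.cast) rfl fun y hy =>
      ZMod.val_natCast_of_lt (hlt y hy),
    Multiset.map_id', Multiset.coe_sort, List.mergeSort_eq_self _ (pairwise_le_shiftDown hsorted)]

lemma toSubset_ofSubset [NeZero n] : toSubset (ofSubset n A) = A := by
  rw [toSubset, sortedVals_ofSubset hA hcard, shiftUp_shiftDown_sort hA hcard,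
    Finset.sort_toFinset]

lemma sum_ofSubset [NeZero n] (hdvd : n ∣ ∑ a ∈ A, a) : (ofSubset n A).sum = n.choose 2 := by
  have hsum : (A.sort (· ≤ ·)).sum = ∑ a ∈ A, a := by
    conv_rhs => rw [← Finset.sort_toFinset A (· ≤ ·)]
    rw [List.sum_toFinset _ (Finset.sort_nodup _ _), List.map_id']
  have hshift := sum_shiftUp (shiftDown (A.sort (· ≤ ·)))
  rw [shiftUp_shiftDown_sort hA hcard, length_shiftDown, Finset.length_sort, hcard, hsum]
    at hshift
  rwa [← natCast_sum_sortedVals, sortedVals_ofSubset hA hcard, natCast_eq_choose_two_iff_dvd,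
    ← hshift]

end Subset

end EGZ

open EGZ in
/-- Bijection between `EGZ_n` (multisets of size `n` over `ZMod n` with sum `binom n 2`)
and `n`-element subsets of `[1, 2n-1]` with sum divisible by `n`. -/
theorem egz_equiv_subsets (n : ℕ) (hn : 1 ≤ n) :
    Nonempty
      ({M : Multiset (ZMod n) // Multiset.card M = n ∧ M.sum = (n.choose 2 : ZMod n)} ≃
       {A : Finset ℕ // A ⊆ Finset.Icc 1 (2 * n - 1) ∧ A.card = n ∧ n ∣ ∑ a ∈ A, a}) := by
  have : NeZero n := ⟨by omega⟩
  exact ⟨{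
    toFun := fun M => ⟨toSubset M.1, toSubset_subset_Icc M.2.1,
      (card_toSubset M.1).trans M.2.1, dvd_sum_toSubset M.2.1 M.2.2⟩
    invFun := fun A => ⟨ofSubset n A.1, (card_ofSubset A.1).trans A.2.2.1,
      sum_ofSubset A.2.1 A.2.2.1 A.2.2.2⟩
    left_inv := fun M => Subtype.ext (ofSubset_toSubset M.1)
    right_inv := fun A => Subtype.ext (toSubset_ofSubset A.2.1 A.2.2.1) }⟩
end

section
/- Let s = (s_0, ..., s_{n-1}) be a score sequence of length n (i.e., a nondecreasing sequence of nonnegative integers with s_0 + ... + s_{k-1} ≥ binomial(k,2) for all 1 ≤ k < n and total sum binomial(n,2)). If s_0 + ... + s_{k-1} = binomial(k,2) for some k < n, then u = (s_0, ..., s_{k-1}) is a score sequence of length k and v = (s_k - k, ..., s_{n-1} - k) is a score sequence of length n - k. -/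
/-!
The prefix bound at `k + 1` gives `s_k ≥ binom (k+1) 2 - binom k 2 = k`, so every entry of the
tail is at least `k`. Subtracting `k` from the tail turns the excess of the prefix sum of `s` of
length `k + m` over `binom (k+m) 2` into the excess of the prefix sum of `v` of length `m` over
`binom m 2`, because `binom (k+m) 2 = binom k 2 + binom m 2 + k m`. The entry bounds need no
separate argument: in a sorted list satisfying the prefix and total conditions, the last entry
equals the total minus the other entries, so it is at most `binom n 2 - binom (n-1) 2 = n - 1`.
-/

/-- A score sequence: nondecreasing, entries in `[0, n-1]`, prefix sums at least
`binom k 2`, and total sum `binom n 2`. -/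
def IsScoreSeq (s : List ℕ) : Prop :=
  s.Pairwise (· ≤ ·) ∧ (∀ x ∈ s, x < s.length) ∧
    (∀ k, 0 < k → k < s.length → k.choose 2 ≤ (s.take k).sum) ∧
    s.sum = s.length.choose 2

/-- A strong score sequence: nonempty and all proper prefix-sum inequalities strict. -/
def IsStrongScoreSeq (s : List ℕ) : Prop :=
  IsScoreSeq s ∧ s ≠ [] ∧ ∀ k, 0 < k → k < s.length → k.choose 2 < (s.take k).sum

/-- Direct sum of score sequences: concatenate `u` with `v` shifted up by `u.length`. -/
def dsum (u v : List ℕ) : List ℕ := u ++ v.map (· + u.length)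

/-- Iterated direct sum of a list of score sequences. -/
def dsumAll (ts : List (List ℕ)) : List ℕ := ts.foldl dsum []

/-- `s + j`: entries shifted by `j`, reduced modulo the length, sorted nondecreasingly. -/
def shift (s : List ℕ) (j : ℕ) : List ℕ :=
  Multiset.sort ((s.map fun x => (x + j) % s.length : List ℕ) : Multiset ℕ) (· ≤ ·)

theorem Nat.choose_two_succ (n : ℕ) : (n + 1).choose 2 = n.choose 2 + n := by
  simp [Nat.choose_succ_succ', add_comm]

theorem Nat.choose_two_add (a b : ℕ) : (a + b).choose 2 = a.choose 2 + b.choose 2 + a * b := by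
  induction b with
  | zero => simp
  | succ b ih =>
    rw [← add_assoc, Nat.choose_two_succ, Nat.choose_two_succ, ih]
    ring

namespace List

theorem sum_map_tsub_add_length_mul {l : List ℕ} {k : ℕ} (h : ∀ x ∈ l, k ≤ x) :
    (l.map (· - k)).sum + l.length * k = l.sum := by
  induction l with
  | nil => simp
  | cons a t ih =>
    rw [forall_mem_cons] at h
    have := ih h.2
    simp only [map_cons, sum_cons, length_cons, add_one_mul]
    omega

theorem lt_length_of_choose_two_le_sum_take {l : List ℕ} (hl : l.Pairwise (· ≤ ·))
    (hpre : ∀ k, 0 < k → k < l.length → k.choose 2 ≤ (l.take k).sum)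
    (hsum : l.sum = l.length.choose 2) {x : ℕ} (hx : x ∈ l) : x < l.length := by
  obtain ⟨t, a, rfl⟩ := l.eq_nil_or_concat'.resolve_left (ne_nil_of_mem hx)
  have hxa : x ≤ a := by
    rcases mem_append.mp hx with hx | hx
    · exact (pairwise_append.mp hl).2.2 x hx a (mem_singleton_self a)
    · exact (mem_singleton.mp hx).le
  have ht : t.length.choose 2 ≤ t.sum := by
    rcases t.length.eq_zero_or_pos with h | h
    · simp [h]
    · simpa using hpre t.length h (by simp)
  simp only [sum_append, sum_singleton, length_append, length_singleton,
    Nat.choose_two_succ] at hsum ⊢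
  omega

end List

open List

theorem IsScoreSeq.of_pairwise {l : List ℕ} (hl : l.Pairwise (· ≤ ·))
    (hpre : ∀ k, 0 < k → k < l.length → k.choose 2 ≤ (l.take k).sum)
    (hsum : l.sum = l.length.choose 2) : IsScoreSeq l :=
  ⟨hl, fun _ hx => lt_length_of_choose_two_le_sum_take hl hpre hsum hx, hpre, hsum⟩

namespace IsScoreSeq

variable {s : List ℕ} {k : ℕ}

theorem choose_two_le_sum_take (hs : IsScoreSeq s) {m : ℕ} (hm : m ≤ s.length) :
    m.choose 2 ≤ (s.take m).sum := by
  rcases m.eq_zero_or_pos with rfl | h0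
  · simp
  rcases hm.lt_or_eq with h | rfl
  · exact hs.2.2.1 m h0 h
  · rw [take_length, hs.2.2.2]

theorem take_of_sum_take_eq (hs : IsScoreSeq s) (hk : k ≤ s.length)
    (heq : (s.take k).sum = k.choose 2) : IsScoreSeq (s.take k) := by
  have hlen : (s.take k).length = k := length_take_of_le hk
  refine of_pairwise (hs.1.sublist (take_sublist k s)) (fun j hj hjk => ?_)
    (by rw [heq, hlen])
  rw [hlen] at hjk
  rw [take_take, min_eq_left hjk.le]
  exact hs.choose_two_le_sum_take (hjk.le.trans hk)

theorem le_of_mem_drop (hs : IsScoreSeq s) (hk : k < s.length)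
    (heq : (s.take k).sum = k.choose 2) {x : ℕ} (hx : x ∈ s.drop k) : k ≤ x := by
  have hsk : k ≤ s[k] := by
    have := hs.choose_two_le_sum_take (m := k + 1) hk
    rw [sum_take_succ s k hk, heq, Nat.choose_two_succ] at this
    omega
  have hsorted := hs.1.sublist (drop_sublist k s)
  rw [drop_eq_getElem_cons hk, pairwise_cons] at hsorted
  rw [drop_eq_getElem_cons hk, mem_cons] at hx
  rcases hx with rfl | hx
  · exact hsk
  · exact hsk.trans (hsorted.1 x hx)

theorem sum_take_map_tsub_drop (hs : IsScoreSeq s) (hk : k < s.length)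
    (heq : (s.take k).sum = k.choose 2) {m : ℕ} (hm : m ≤ s.length - k) :
    (((s.drop k).map (· - k)).take m).sum + (k + m).choose 2 =
      (s.take (k + m)).sum + m.choose 2 := by
  have hlen : ((s.drop k).take m).length = m := by simp; omega
  have hsum := sum_map_tsub_add_length_mul (l := (s.drop k).take m) fun x hx =>
    hs.le_of_mem_drop hk heq (mem_of_mem_take hx)
  rw [hlen] at hsum
  rw [← map_take, take_add, sum_append, heq, Nat.choose_two_add, mul_comm k m]
  omega

theorem map_tsub_drop_of_sum_take_eq (hs : IsScoreSeq s) (hk : k < s.length)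
    (heq : (s.take k).sum = k.choose 2) : IsScoreSeq ((s.drop k).map (· - k)) := by
  have hlen : ((s.drop k).map (· - k)).length = s.length - k := by simp
  refine of_pairwise
    ((hs.1.sublist (drop_sublist k s)).map _ fun _ _ h => Nat.sub_le_sub_right h k)
    (fun m _ hm => ?_) ?_
  · rw [hlen] at hm
    have := hs.sum_take_map_tsub_drop hk heq hm.le
    have := hs.choose_two_le_sum_take (m := k + m) (by omega)
    omega
  · have := hs.sum_take_map_tsub_drop hk heq le_rfl
    rw [Nat.add_sub_cancel' hk.le, take_length, hs.2.2.2, ← hlen, take_length] at this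
    omega

end IsScoreSeq

/-- If a prefix sum of a score sequence meets the bound `binom k 2` exactly, the
sequence splits as a direct sum of two score sequences. -/
theorem scoreSeq_split (s : List ℕ) (hs : IsScoreSeq s) (k : ℕ) (hk : k < s.length)
    (heq : (s.take k).sum = k.choose 2) :
    IsScoreSeq (s.take k) ∧ IsScoreSeq ((s.drop k).map (· - k)) :=
  ⟨hs.take_of_sum_take_eq hk.le heq, hs.map_tsub_drop_of_sum_take_eq hk heq⟩
end

section
/- For every multiset M of size n over Z/nZ whose sum is congruent to binomial(n,2) modulo n, there exists a score sequence s of length n and an integer j with 0 ≤ j ≤ n-1 such that the multiset {s_0 + j, ..., s_{n-1} + j} of residues modulo n equals M. -/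
/-!
Sort the residues of `M` as integers `0 ≤ a₀ ≤ ⋯ ≤ aₙ₋₁ < n` and extend them to the monotone
sequence `A` with `A (i + n) = A i + n`. Since `∑ aᵢ ≡ binom n 2 (mod n)`, we can write
`∑ aᵢ = binom n 2 + n q`; then `B i = A i - i - q` is `n`-periodic with period sum zero, so by the
cycle lemma some rotation `k` has all partial sums of `B (k + ·)` nonnegative. The sequence
`sᵢ = A (k + i) - (k + q)` is then nondecreasing with prefix sums `∑ B (k + ·) + binom m 2`, i.e. a
score sequence, and `sᵢ + (k + q)` runs through the residues of `M`.
-/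

open Finset

theorem Finset.sum_range_id_eq_choose_two (n : ℕ) : ∑ i ∈ range n, i = n.choose 2 := by
  rw [sum_range_id, Nat.choose_two_right]

namespace Function.Periodic

theorem multiset_map_range_add {α : Type*} {f : ℕ → α} {n : ℕ} (hf : Periodic f n) (k : ℕ) :
    (Multiset.range n).map (fun i => f (k + i)) = (Multiset.range n).map f := by
  have hk : (Multiset.range k).map (fun i => f (n + i)) = (Multiset.range k).map f :=
    Multiset.map_congr rfl fun i _ => by rw [add_comm, hf]
  apply add_left_cancel (a := (Multiset.range k).map f)
  calc (Multiset.range k).map f + (Multiset.range n).map (fun i => f (k + i))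
      = (Multiset.range (k + n)).map f := by
        rw [Multiset.range_add, Multiset.map_add, Multiset.map_map, Function.comp_def]
    _ = (Multiset.range n).map f + (Multiset.range k).map (fun i => f (n + i)) := by
        rw [add_comm k n, Multiset.range_add, Multiset.map_add, Multiset.map_map, Function.comp_def]
    _ = (Multiset.range k).map f + (Multiset.range n).map f := by rw [hk, add_comm]

theorem sum_range_add {M : Type*} [AddCommMonoid M] {f : ℕ → M} {n : ℕ} (hf : Periodic f n)
    (k : ℕ) : ∑ i ∈ range n, f (k + i) = ∑ i ∈ range n, f i :=
  congrArg Multiset.sum (hf.multiset_map_range_add k)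

/-- The cycle lemma: start at a minimum of the partial sums. -/
theorem exists_forall_sum_range_add_nonneg {G : Type*} [AddCommGroup G] [LinearOrder G]
    [IsOrderedAddMonoid G] {B : ℕ → G} {n : ℕ} (hB : Periodic B n) (hn : 0 < n)
    (hsum : ∑ i ∈ range n, B i = 0) :
    ∃ k, ∀ m, 0 ≤ ∑ i ∈ range m, B (k + i) := by
  set T : ℕ → G := fun m => ∑ i ∈ range m, B i
  have hT : Periodic T n := fun m => by
    simp only [T, Finset.sum_range_add, hB.sum_range_add, hsum, add_zero]
  obtain ⟨k, -, hk⟩ := exists_min_image (range n) T ⟨0, mem_range.mpr hn⟩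
  refine ⟨k, fun m => ?_⟩
  have hmin : T k ≤ T (k + m) := hT.map_mod_nat (k + m) ▸ hk _ (mem_range.mpr (Nat.mod_lt _ hn))
  simpa only [T, Finset.sum_range_add, le_add_iff_nonneg_right] using hmin

end Function.Periodic

theorem List.sum_take_map_range (f : ℕ → ℕ) {m n : ℕ} (hm : m ≤ n) :
    (((List.range n).map f).take m).sum = ∑ i ∈ Finset.range m, f i := by
  rw [← List.map_take, List.take_range, min_eq_left hm, Finset.sum_eq_multiset_sum,
    Finset.range_val, Multiset.range, Multiset.map_coe, Multiset.sum_coe]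

theorem isScoreSeq_map_range {f : ℕ → ℕ} {n : ℕ} (hf : Monotone f)
    (hprefix : ∀ m < n, m.choose 2 ≤ ∑ i ∈ range m, f i)
    (htotal : ∑ i ∈ range n, f i = n.choose 2) :
    IsScoreSeq ((List.range n).map f) := by
  have hsum : ((List.range n).map f).sum = n.choose 2 := by
    rw [← List.take_length (l := (List.range n).map f), List.length_map, List.length_range,
      List.sum_take_map_range f le_rfl, htotal]
  refine ⟨?_, ?_, ?_, by simpa using hsum⟩
  · exact List.pairwise_map.mpr (List.pairwise_le_range.imp fun h => hf h)
  · simp only [List.mem_map, List.mem_range, List.length_map, List.length_range]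
    rintro _ ⟨i, hi, rfl⟩
    -- the last score is what the total leaves over the first `n - 1`, hence at most `n - 1`
    obtain ⟨n, rfl⟩ := Nat.exists_eq_add_one_of_ne_zero (by omega : n ≠ 0)
    have hlast : f n ≤ n := by
      have hchoose : (n + 1).choose 2 = n.choose 2 + n := by
        rw [Nat.choose_succ_succ', Nat.choose_one_right, add_comm]
      rw [sum_range_succ, hchoose] at htotal
      have := hprefix n (Nat.lt_succ_self n)
      omega
    exact (hf (Nat.lt_succ_iff.mp hi)).trans_lt (Nat.lt_succ_of_le hlast)
  · intro m _ hm
    rw [List.length_map, List.length_range] at hm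
    rw [List.sum_take_map_range f hm.le]
    exact hprefix m hm

theorem exists_isScoreSeq_map_range_sub {A : ℕ → ℤ} {n : ℕ} (hn : 0 < n) (hA : Monotone A)
    (hper : ∀ i, A (i + n) = A i + n)
    (hsum : ((∑ i ∈ range n, A i : ℤ) : ZMod n) = n.choose 2) :
    ∃ (k : ℕ) (c : ℤ), (∀ i, c ≤ A (k + i)) ∧
      IsScoreSeq ((List.range n).map fun i => (A (k + i) - c).toNat) := by
  have hgauss (m : ℕ) : ∑ i ∈ range m, (i : ℤ) = m.choose 2 := by
    rw [← Nat.cast_sum, sum_range_id_eq_choose_two]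
  obtain ⟨q, hq⟩ : (n : ℤ) ∣ ∑ i ∈ range n, A i - n.choose 2 :=
    (ZMod.intCast_eq_intCast_iff_dvd_sub _ _ _).mp (by rw [hsum, Int.cast_natCast])
  set B : ℕ → ℤ := fun i => A i - i - q
  have hB : Function.Periodic B n := fun i => by simp only [B, hper]; push_cast; ring
  have hBsum : ∑ i ∈ range n, B i = 0 := by
    simp only [B, sum_sub_distrib, sum_const, card_range, nsmul_eq_mul, hgauss]
    linarith
  obtain ⟨k, hk⟩ := hB.exists_forall_sum_range_add_nonneg hn hBsum
  have hAB (i : ℕ) : A (k + i) - (k + q) = B (k + i) + i := by simp only [B]; push_cast; ring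
  have hc (i : ℕ) : (k + q : ℤ) ≤ A (k + i) := by
    have hBk : 0 ≤ A k - k - q := by simpa [B] using hk 1
    linarith [hA (Nat.le_add_right k i)]
  have hprefix (m : ℕ) : ((∑ i ∈ range m, (A (k + i) - (k + q)).toNat : ℕ) : ℤ)
      = ∑ i ∈ range m, B (k + i) + m.choose 2 := by
    rw [Nat.cast_sum, ← hgauss, ← sum_add_distrib]
    exact sum_congr rfl fun i _ => by rw [Int.toNat_of_nonneg (sub_nonneg.mpr (hc i)), hAB]
  refine ⟨k, k + q, hc, isScoreSeq_map_range ?_ (fun m _ => ?_) ?_⟩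
  · exact fun i j hij => Int.toNat_le_toNat (by linarith [hA (Nat.add_le_add_left hij k)])
  · exact (Nat.cast_le (α := ℤ)).mp (by rw [hprefix m]; linarith [hk m])
  · refine Nat.cast_injective (R := ℤ) ((hprefix n).trans ?_)
    rw [hB.sum_range_add, hBsum, zero_add]

theorem List.map_getD_range_length (l : List ℕ) : (List.range l.length).map (l.getD · 0) = l :=
  List.ext_getElem (by simp) fun i _ h => by simp [h]

theorem Multiset.exists_monotoneOn_map_range_eq {n : ℕ} [NeZero n] (M : Multiset (ZMod n))
    (hM : Multiset.card M = n) :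
    ∃ g : ℕ → ℕ, MonotoneOn g (Set.Iio n) ∧ (∀ i < n, g i < n) ∧
      (Multiset.range n).map (fun i => (g i : ZMod n)) = M := by
  set l := (M.map ZMod.val).sort (· ≤ ·)
  have hlen : l.length = n := by rw [Multiset.length_sort, Multiset.card_map, hM]
  refine ⟨fun i => l.getD i 0, fun i hi j hj hij => ?_, fun i hi => ?_, ?_⟩
  · dsimp only
    rw [List.getD_eq_getElem _ _ (hlen ▸ hi), List.getD_eq_getElem _ _ (hlen ▸ hj)]
    rcases hij.eq_or_lt with rfl | hij
    · rfl
    · exact List.pairwise_iff_getElem.mp (Multiset.pairwise_sort _ _) _ _ _ _ hij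
  · dsimp only
    rw [List.getD_eq_getElem _ _ (hlen ▸ hi)]
    have hmem : l[i] ∈ M.map ZMod.val := (Multiset.mem_sort _).mp (List.getElem_mem _)
    obtain ⟨x, -, hx⟩ := Multiset.mem_map.mp hmem
    exact hx ▸ ZMod.val_lt x
  · have hl : (Multiset.range n).map (l.getD · 0) = M.map ZMod.val := by
      have h := List.map_getD_range_length l
      rw [hlen] at h
      rw [Multiset.range, Multiset.map_coe, h, Multiset.sort_eq]
    rw [← Function.comp_def Nat.cast, ← Multiset.map_map, hl, Multiset.map_map]
    simp

def periodicExtension (n : ℕ) (g : ℕ → ℕ) (i : ℕ) : ℤ := g (i % n) + n * (i / n : ℕ)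

section periodicExtension

variable {n : ℕ} {g : ℕ → ℕ}

theorem periodicExtension_add_self (hn : 0 < n) (i : ℕ) :
    periodicExtension n g (i + n) = periodicExtension n g i + n := by
  simp only [periodicExtension, Nat.add_mod_right, Nat.add_div_right i hn]
  push_cast
  ring

theorem intCast_periodicExtension (i : ℕ) : (periodicExtension n g i : ZMod n) = g (i % n) := by
  simp [periodicExtension]

theorem monotone_periodicExtension (hn : 0 < n) (hg : MonotoneOn g (Set.Iio n))
    (hgn : ∀ i < n, g i < n) : Monotone (periodicExtension n g) := by
  intro i j hij
  rcases (Nat.div_le_div_right (c := n) hij).eq_or_lt with hq | hq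
  · have hr : i % n ≤ j % n := by
      have hi := Nat.div_add_mod i n
      have hj := Nat.div_add_mod j n
      rw [hq] at hi
      omega
    have hle := hg (Nat.mod_lt i hn) (Nat.mod_lt j hn) hr
    simp only [periodicExtension, hq]
    gcongr
  · have hi := hgn _ (Nat.mod_lt i hn)
    have hmul : n * (i / n + 1) ≤ n * (j / n) := Nat.mul_le_mul_left n hq
    simp only [periodicExtension]
    push_cast at hi hmul ⊢
    nlinarith

end periodicExtension

/-- Every multiset in `EGZ_n` arises as the multiset of residues of a shifted score
sequence of length `n`. -/
theorem egz_is_shifted_scoreSeq (n : ℕ) (hn : 1 ≤ n) (M : Multiset (ZMod n))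
    (hcard : Multiset.card M = n) (hsum : M.sum = (n.choose 2 : ZMod n)) :
    ∃ (s : List ℕ) (j : ℕ), IsScoreSeq s ∧ s.length = n ∧ j ≤ n - 1 ∧
      Multiset.map (fun x => ((x + j : ℕ) : ZMod n)) (↑s : Multiset ℕ) = M := by
  have : NeZero n := ⟨by omega⟩
  obtain ⟨g, hg, hgn, hgM⟩ := M.exists_monotoneOn_map_range_eq hcard
  have hAM : (Multiset.range n).map (fun i => (periodicExtension n g i : ZMod n)) = M := by
    rw [← hgM]
    refine Multiset.map_congr rfl fun i hi => ?_
    rw [intCast_periodicExtension, Nat.mod_eq_of_lt (Multiset.mem_range.mp hi)]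
  have hAper : Function.Periodic (fun i => (periodicExtension n g i : ZMod n)) n := fun i => by
    simp [periodicExtension_add_self hn]
  have hAsum : ((∑ i ∈ range n, periodicExtension n g i : ℤ) : ZMod n) = n.choose 2 := by
    rw [Int.cast_sum, ← hsum, ← hAM, sum_eq_multiset_sum, range_val]
  obtain ⟨k, c, hc, hs⟩ := exists_isScoreSeq_map_range_sub hn
    (monotone_periodicExtension hn hg hgn) (periodicExtension_add_self hn) hAsum
  refine ⟨_, (c : ZMod n).val, hs, by simp, Nat.le_sub_one_of_lt (ZMod.val_lt _), ?_⟩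
  rw [← hAM, ← hAper.multiset_map_range_add k, ← Multiset.map_coe, Multiset.map_map]
  refine Multiset.map_congr rfl fun i _ => ?_
  have hcast : (((periodicExtension n g (k + i) - c).toNat : ℕ) : ZMod n)
      = ((periodicExtension n g (k + i) - c : ℤ) : ZMod n) := by
    rw [← Int.cast_natCast, Int.toNat_of_nonneg (sub_nonneg.mpr (hc i))]
  rw [Function.comp_apply, Nat.cast_add, hcast, ZMod.natCast_val, ZMod.cast_id', id, Int.cast_sub,
    sub_add_cancel]
end

section
/- Let L_n be the set of pairs (s, i) where s is a score sequence of length n with strong-summand decomposition s = t_1 ⊕ ... ⊕ t_k and i is a position in the last strong summand, i.e., n - |t_k| ≤ i ≤ n-1. Then the map f(s, i) = μ(s - i), sending such a pair to the multiset of residues {s_0 - i, ..., s_{n-1} - i} modulo n, is a bijection from L_n onto EGZ_n, the set of multisets of size n over Z/nZ with sum binomial(n,2) mod n. Moreover, if M = f(s,i), then the multiplicity of 0 in M equals the number of indices j with s_j = i. -/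
/-- The set of pointed score sequences of length `n` whose distinguished position
lies in the last strong summand. -/
def Lset (n : ℕ) : Set (List ℕ × ℕ) :=
  {p | IsScoreSeq p.1 ∧ p.1.length = n ∧
    ∃ u t, p.1 = dsum u t ∧ IsScoreSeq u ∧ IsStrongScoreSeq t ∧
      n - t.length ≤ p.2 ∧ p.2 ≤ n - 1}

/-- `EGZ_n`: multisets of size `n` over `ZMod n` with sum `binom n 2`. -/
def EGZset (n : ℕ) : Set (Multiset (ZMod n)) :=
  {M | Multiset.card M = n ∧ M.sum = (n.choose 2 : ZMod n)}

theorem List.sum_map_add_const {R : Type*} [CommSemiring R] (l : List R) (c : R) :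
    (l.map (· + c)).sum = l.sum + l.length * c := by
  induction l with
  | nil => simp
  | cons a l ih => simp [ih]; ring

theorem List.Pairwise.getElem_le_getElem {α : Type*} [Preorder α] {l : List α}
    (hl : l.Pairwise (· ≤ ·)) {i j : ℕ} (hij : i ≤ j) (hj : j < l.length) :
    l[i] ≤ l[j] := by
  rcases hij.eq_or_lt with rfl | hlt
  · exact le_rfl
  · exact List.pairwise_iff_getElem.1 hl i j (by omega) hj hlt

theorem List.Pairwise.exists_take_lt_drop_ge {α : Type*} [LinearOrder α] {l : List α}
    (hl : l.Pairwise (· ≤ ·)) (v : α) :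
    ∃ ρ ≤ l.length, (∀ x ∈ l.take ρ, x < v) ∧ ∀ x ∈ l.drop ρ, v ≤ x := by
  induction l with
  | nil => exact ⟨0, le_rfl, by simp, by simp⟩
  | cons a l ih =>
    obtain ⟨ha, hl⟩ := List.pairwise_cons.1 hl
    by_cases hva : v ≤ a
    · refine ⟨0, Nat.zero_le _, by simp, ?_⟩
      simp only [List.drop_zero, List.mem_cons]
      rintro x (rfl | hx)
      exacts [hva, hva.trans (ha x hx)]
    · obtain ⟨ρ, hρ, hlt, hge⟩ := ih hl
      refine ⟨ρ + 1, by simpa using hρ, ?_, by simpa using hge⟩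
      simp only [List.take_succ_cons, List.mem_cons]
      rintro x (rfl | hx)
      exacts [not_le.1 hva, hlt x hx]

namespace ScoreSeq

open List

def excess (b : List ℤ) (k : ℕ) : ℤ := (b.take k).sum - (k.choose 2 : ℕ)

/-- Score sequences over `ℤ`; the bounds `0 ≤ x < b.length` on the entries follow
(`IsIntScoreSeq.bounds`). -/
structure IsIntScoreSeq (b : List ℤ) : Prop where
  sorted : b.Pairwise (· ≤ ·)
  excess_nonneg : ∀ k ≤ b.length, 0 ≤ excess b k
  excess_length : excess b b.length = 0

section Excess

variable {b : List ℤ} {k m : ℕ}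

@[simp] theorem excess_zero (b : List ℤ) : excess b 0 = 0 := by simp [excess]

theorem excess_succ (hk : k < b.length) : excess b (k + 1) = excess b k + b[k] - k := by
  simp only [excess, sum_take_succ _ _ hk, Nat.choose_two_add k 1,
    show Nat.choose 1 2 = 0 from rfl]
  push_cast
  ring

theorem excess_take (hk : k ≤ m) : excess (b.take m) k = excess b k := by
  simp [excess, take_take, min_eq_left hk]

theorem excess_length_eq_zero_iff : excess b b.length = 0 ↔ b.sum = (b.length.choose 2 : ℕ) := by
  simp [excess, sub_eq_zero]

theorem excess_map_natCast (s : List ℕ) (k : ℕ) :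
    excess (s.map (↑)) k = ((s.take k).sum : ℤ) - (k.choose 2 : ℕ) := by
  simp [excess, ← map_take, Nat.cast_list_sum]

end Excess

theorem IsIntScoreSeq.bounds {b : List ℤ} (hb : IsIntScoreSeq b) {x : ℤ} (hx : x ∈ b) :
    0 ≤ x ∧ x < b.length := by
  obtain ⟨j, hj, rfl⟩ := mem_iff_getElem.1 hx
  have hfirst : (0 : ℤ) ≤ b[0] := by
    have h := excess_succ (b := b) (k := 0) (by omega)
    have := hb.excess_nonneg 1 (by omega)
    simp only [zero_add, excess_zero, CharP.cast_eq_zero] at h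
    linarith
  have hlast : b[b.length - 1] ≤ b.length - 1 := by
    have h := excess_succ (b := b) (k := b.length - 1) (by omega)
    rw [Nat.sub_add_cancel (by omega), hb.excess_length] at h
    have := hb.excess_nonneg (b.length - 1) (by omega)
    push_cast [show 1 ≤ b.length by omega] at h
    linarith
  have h0j : b[0] ≤ b[j] := hb.sorted.getElem_le_getElem (Nat.zero_le j) hj
  have hjl : b[j] ≤ b[b.length - 1] := hb.sorted.getElem_le_getElem (by omega) (by omega)
  constructor <;> linarith

theorem isScoreSeq_iff (s : List ℕ) : IsScoreSeq s ↔ IsIntScoreSeq (s.map (↑)) := by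
  simp only [IsScoreSeq]
  constructor
  · rintro ⟨hsort, -, hpre, hsum⟩
    refine ⟨hsort.map _ fun _ _ => Int.ofNat_le.2, fun k hk => ?_, ?_⟩
    · rw [excess_map_natCast, sub_nonneg]
      rw [length_map] at hk
      rcases Nat.eq_zero_or_pos k with rfl | hk0
      · simp
      rcases hk.eq_or_lt with rfl | hkn
      · rw [take_length, hsum]
      · exact_mod_cast hpre k hk0 hkn
    · rw [length_map, excess_map_natCast, take_length, hsum, sub_self]
  · intro h
    refine ⟨pairwise_map.1 h.sorted |>.imp Int.ofNat_le.1, fun x hx => ?_,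
      fun k _ hk => ?_, ?_⟩
    · simpa using (h.bounds (mem_map_of_mem hx)).2
    · have := h.excess_nonneg k (by simp; omega)
      rw [excess_map_natCast, sub_nonneg] at this
      exact_mod_cast this
    · have := h.excess_length
      rw [length_map, excess_map_natCast, take_length, sub_eq_zero] at this
      exact_mod_cast this

/-- On a score sequence `u ⊕ t` with `|u| = r` this gives `t ⊕ u`. -/
def cycRot (b : List ℤ) (r : ℕ) : List ℤ :=
  (b.drop r).map (· + -(r : ℤ)) ++ (b.take r).map (· + ((b.length : ℤ) - r))

section CycRot

variable {b : List ℤ} {r K : ℕ}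

@[simp] theorem length_cycRot (b : List ℤ) (r : ℕ) : (cycRot b r).length = b.length := by
  simp only [cycRot, length_append, length_map, length_drop, length_take]
  omega

theorem excess_cycRot_of_le (hK : r + K ≤ b.length) :
    excess (cycRot b r) K = excess b (r + K) - excess b r := by
  have htake : (cycRot b r).take K = ((b.drop r).take K).map (· + -(r : ℤ)) := by
    rw [cycRot, take_append_of_le_length (by simp; omega), map_take]
  have hsum : (b.take (r + K)).sum = (b.take r).sum + ((b.drop r).take K).sum := by
    rw [take_add, sum_append]
  simp only [excess, htake, sum_map_add_const, hsum, length_take, length_drop, Nat.choose_two_add]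
  rw [min_eq_left (by omega)]
  push_cast
  ring

theorem excess_cycRot_of_ge (hb : excess b b.length = 0) (hr : r ≤ b.length)
    (hK : b.length ≤ r + K) (hKn : K ≤ b.length) :
    excess (cycRot b r) K = excess b (r + K - b.length) - excess b r := by
  obtain ⟨d, hd⟩ := Nat.exists_eq_add_of_le hr
  obtain ⟨j, rfl⟩ := Nat.exists_eq_add_of_le (show d ≤ K by omega)
  have hj : r + (d + j) - b.length = j := by omega
  have htake : (cycRot b r).take (d + j) =
      (b.drop r).map (· + -(r : ℤ)) ++ (b.take j).map (· + ((b.length : ℤ) - r)) := by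
    rw [cycRot, take_append, take_of_length_le (by simp; omega), length_map, length_drop,
      show d + j - (b.length - r) = j by omega, ← map_take, take_take, min_eq_left (by omega)]
  have hsum : (b.take r).sum + (b.drop r).sum = (b.length.choose 2 : ℕ) := by
    rw [sum_take_add_sum_drop, ← excess_length_eq_zero_iff.1 hb]
  simp only [excess, htake, hj, sum_append, sum_map_add_const, length_drop, length_take,
    min_eq_left (show j ≤ b.length by omega)]
  rw [hd] at hsum ⊢
  simp only [Nat.choose_two_add, Nat.add_sub_cancel_left] at hsum ⊢
  push_cast at hsum ⊢
  linear_combination hsum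

theorem excess_cycRot_length (hb : excess b b.length = 0)
    (hr : r ≤ b.length) : excess (cycRot b r) b.length = 0 := by
  rw [excess_cycRot_of_ge hb hr (by omega) le_rfl, Nat.add_sub_cancel, sub_self]

theorem pairwise_cycRot (hs : b.Pairwise (· ≤ ·)) (hspread : ∀ x ∈ b, ∀ y ∈ b, x ≤ y + b.length)
    (r : ℕ) : (cycRot b r).Pairwise (· ≤ ·) := by
  refine pairwise_append.2 ⟨?_, ?_, ?_⟩
  · exact ((hs.sublist (drop_sublist _ _)).map _ fun _ _ h => by simpa using h)
  · exact ((hs.sublist (take_sublist _ _)).map _ fun _ _ h => by simpa using h)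
  · simp only [mem_map]
    rintro _ ⟨x, hx, rfl⟩ _ ⟨y, hy, rfl⟩
    have := hspread x (mem_of_mem_drop hx) y (mem_of_mem_take hy)
    linarith

theorem IsIntScoreSeq.spread (hb : IsIntScoreSeq b) : ∀ x ∈ b, ∀ y ∈ b, x ≤ y + b.length :=
  fun x hx y hy => by linarith [(hb.bounds hx).2, (hb.bounds hy).1]

theorem isIntScoreSeq_cycRot (hs : b.Pairwise (· ≤ ·))
    (hspread : ∀ x ∈ b, ∀ y ∈ b, x ≤ y + b.length) (hb : excess b b.length = 0)
    (hr : r ≤ b.length) (hmin : ∀ k ≤ b.length, excess b r ≤ excess b k) :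
    IsIntScoreSeq (cycRot b r) := by
  refine ⟨pairwise_cycRot hs hspread r, fun K hK => ?_, ?_⟩
  · rw [length_cycRot] at hK
    rcases le_or_gt (r + K) b.length with h | h
    · rw [excess_cycRot_of_le h, sub_nonneg]
      exact hmin _ h
    · rw [excess_cycRot_of_ge hb hr h.le hK, sub_nonneg]
      exact hmin _ (by omega)
  · rw [length_cycRot]
    exact excess_cycRot_length hb hr

theorem IsIntScoreSeq.excess_eq_zero_of_cycRot (hb : IsIntScoreSeq b)
    (hrot : IsIntScoreSeq (cycRot b r)) (hr : r ≤ b.length) : excess b r = 0 := by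
  have h := excess_cycRot_of_le (b := b) (r := r) (K := b.length - r) (by omega)
  rw [Nat.add_sub_cancel' hr, hb.excess_length, zero_sub] at h
  have := hrot.excess_nonneg (b.length - r) (by simp)
  linarith [hb.excess_nonneg r hr]

@[simp] theorem cycRot_length_self (b : List ℤ) : cycRot b b.length = b := by
  simp [cycRot]

theorem map_intCast_sub_cycRot {n : ℕ} (hn : b.length = n) (hr : r ≤ n) (c : ZMod n) :
    (cycRot b r : Multiset ℤ).map (fun x : ℤ => (x : ZMod n) - c) =
      (b : Multiset ℤ).map (fun x : ℤ => (x : ZMod n) - (r + c)) := by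
  subst hn
  rw [Multiset.map_coe, Multiset.map_coe, Multiset.coe_eq_coe]
  have hwrap : ∀ x : ℤ, ((x + ((b.length : ℤ) - r) : ℤ) : ZMod b.length) - c = x - (r + c) := by
    intro x; push_cast; rw [ZMod.natCast_self]; ring
  have hdrop : ∀ x : ℤ, ((x + -(r : ℤ) : ℤ) : ZMod b.length) - c = x - (r + c) := by
    intro x; push_cast; ring
  calc (cycRot b r).map (fun x : ℤ => (x : ZMod b.length) - c)
      = (b.drop r).map (fun x : ℤ => (x : ZMod b.length) - (r + c)) ++
          (b.take r).map (fun x : ℤ => (x : ZMod b.length) - (r + c)) := by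
        simp only [cycRot, map_append, map_map, Function.comp_def, hwrap, hdrop]
    _ ~ (b.take r).map (fun x : ℤ => (x : ZMod b.length) - (r + c)) ++
          (b.drop r).map (fun x : ℤ => (x : ZMod b.length) - (r + c)) := perm_append_comm
    _ = b.map (fun x : ℤ => (x : ZMod b.length) - (r + c)) := by
        rw [← map_append, take_append_drop]

end CycRot

theorem excess_dsum {u t : List ℕ} (hu : u.sum = u.length.choose 2) {j : ℕ} (hj : j ≤ t.length) :
    excess ((dsum u t).map (↑)) (u.length + j) = excess (t.map (↑)) j := by
  have hsum : ((dsum u t).take (u.length + j)).sum = u.sum + (t.take j).sum + j * u.length := by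
    rw [dsum, take_length_add_append, sum_append, ← map_take, sum_map_add_const, length_take,
      min_eq_left hj, Nat.cast_id, add_assoc]
  rw [excess_map_natCast, excess_map_natCast, hsum, hu, Nat.choose_two_add]
  push_cast
  ring

theorem dsum_take_drop {s : List ℕ} {m : ℕ} (hm : m ≤ s.length) (h : ∀ x ∈ s.drop m, m ≤ x) :
    dsum (s.take m) ((s.drop m).map (· - m)) = s := by
  rw [dsum, length_take, min_eq_left hm, map_map]
  conv_rhs => rw [← take_append_drop m s]
  congr 1
  conv_rhs => rw [← map_id (s.drop m)]
  exact map_congr_left fun x hx => Nat.sub_add_cancel (h x hx)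

theorem IsIntScoreSeq.take {b : List ℤ} (hb : IsIntScoreSeq b) {m : ℕ} (hm : m ≤ b.length)
    (h : excess b m = 0) : IsIntScoreSeq (b.take m) := by
  have hlen : (b.take m).length = m := by simp [hm]
  refine ⟨hb.sorted.sublist (take_sublist _ _), fun k hk => ?_, ?_⟩
  · rw [excess_take (by omega)]
    exact hb.excess_nonneg k (by omega)
  · rw [hlen, excess_take le_rfl, h]

theorem isIntScoreSeq_of_dsum {u t : List ℕ} (hu : u.sum = u.length.choose 2)
    (h : IsIntScoreSeq ((dsum u t).map (↑))) : IsIntScoreSeq (t.map (↑)) := by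
  have hsorted : t.Pairwise (· ≤ ·) := by
    have := (pairwise_append.1 (pairwise_map.1 h.sorted)).2.1
    exact (pairwise_map.1 this).imp fun hxy => by omega
  refine ⟨hsorted.map _ fun _ _ => Int.ofNat_le.2, fun j hj => ?_, ?_⟩
  · rw [length_map] at hj
    rw [← excess_dsum hu hj]
    exact h.excess_nonneg _ (by simp [dsum]; omega)
  · have := h.excess_length
    simp only [length_map, dsum, length_append] at this ⊢
    rwa [← dsum, excess_dsum hu le_rfl] at this

theorem IsIntScoreSeq.le_of_mem_drop {b : List ℤ} (hb : IsIntScoreSeq b) {m : ℕ}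
    (hm : m < b.length) (h : excess b m = 0) {x : ℤ} (hx : x ∈ b.drop m) : (m : ℤ) ≤ x := by
  have hstep := excess_succ hm
  have := hb.excess_nonneg (m + 1) hm
  obtain ⟨j, hj, rfl⟩ := mem_iff_getElem.1 hx
  rw [getElem_drop]
  have := hb.sorted.getElem_le_getElem (i := m) (j := m + j) (by omega) (by simp at hj; omega)
  linarith

/-- Split `s` at its last split point `m ≤ i`; no split point lies beyond `m`, so the second
summand is strong. -/
theorem mem_Lset_of_forall_le {n : ℕ} {s : List ℕ} {i : ℕ} (hs : IsIntScoreSeq (s.map (↑)))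
    (hlen : s.length = n) (hi : i < n)
    (hsplit : ∀ k, 0 < k → k < n → excess (s.map (↑)) k = 0 → k ≤ i) : (s, i) ∈ Lset n := by
  set b : List ℤ := s.map (↑)
  have hb : b.length = n := by simp [b, hlen]
  set m := Nat.findGreatest (fun k => excess b k = 0) (n - 1)
  have hm0 : excess b m = 0 :=
    Nat.findGreatest_spec (P := fun k => excess b k = 0) (Nat.zero_le _) (excess_zero b)
  have hmn : m < n := by
    have := Nat.findGreatest_le (P := fun k => excess b k = 0) (n - 1)
    omega
  have hgt : ∀ k, m < k → k < n → 0 < excess b k := fun k hmk hkn =>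
    (hs.excess_nonneg k (by omega)).lt_of_ne' (Nat.findGreatest_is_greatest hmk (by omega))
  have hmi : m ≤ i := by
    rcases Nat.eq_zero_or_pos m with h | h
    · omega
    · exact hsplit m h hmn hm0
  have hdec : dsum (s.take m) ((s.drop m).map (· - m)) = s :=
    dsum_take_drop (by omega) fun x hx => by
      have := hs.le_of_mem_drop (x := x) (by omega) hm0
        (by rw [← map_drop]; exact mem_map_of_mem hx)
      exact_mod_cast this
  have hulen : (s.take m).length = m := by simp; omega
  have husum : (s.take m).sum = (s.take m).length.choose 2 := by
    rw [excess_map_natCast] at hm0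
    rw [hulen]
    omega
  refine ⟨(isScoreSeq_iff s).2 hs, hlen, s.take m, (s.drop m).map (· - m), hdec.symm,
    (isScoreSeq_iff _).2 (by rw [map_take]; exact hs.take (by omega) hm0),
    ⟨(isScoreSeq_iff _).2 (isIntScoreSeq_of_dsum husum (by rw [hdec]; exact hs)),
      ne_nil_of_length_pos (by simp; omega), fun j hj0 hjt => ?_⟩, by simp; omega, by omega⟩
  have hj := excess_dsum husum (j := j) hjt.le
  rw [hdec, hulen, excess_map_natCast ((s.drop m).map (· - m))] at hj
  change excess b (m + j) = _ at hj
  have := hgt (m + j) (by omega) (by simp at hjt; omega)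
  omega

theorem mem_Lset_iff {n : ℕ} {s : List ℕ} {i : ℕ} :
    (s, i) ∈ Lset n ↔ IsIntScoreSeq (s.map (↑)) ∧ s.length = n ∧ i < n ∧
      ∀ k, 0 < k → k < n → excess (s.map (↑)) k = 0 → k ≤ i := by
  refine ⟨?_, fun ⟨hs, hlen, hi, hsplit⟩ => mem_Lset_of_forall_le hs hlen hi hsplit⟩
  rintro ⟨hs, hlen, u, t, hdec, hu, ⟨-, ht, hstrong⟩, hi, hin⟩
  have hlen' : u.length + t.length = n := by rw [← hlen, hdec]; simp [dsum]
  have ht0 := length_pos_of_ne_nil ht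
  refine ⟨(isScoreSeq_iff s).1 hs, hlen, by omega, fun k hk0 hkn hk => ?_⟩
  by_contra hik
  have hj := excess_dsum hu.2.2.2 (t := t) (j := k - u.length) (by omega)
  rw [← hdec, Nat.add_sub_cancel' (by omega), hk, excess_map_natCast] at hj
  have := hstrong (k - u.length) (by omega) (by omega)
  omega

theorem eq_of_map_intCast_eq {n : ℕ} [NeZero n] {b b' : List ℤ}
    (hb : b.Pairwise (· ≤ ·)) (hb' : b'.Pairwise (· ≤ ·))
    (hbn : ∀ x ∈ b, 0 ≤ x ∧ x < n) (hbn' : ∀ x ∈ b', 0 ≤ x ∧ x < n)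
    (h : (b : Multiset ℤ).map ((↑) : ℤ → ZMod n) = (b' : Multiset ℤ).map (↑)) : b = b' := by
  have hval : ∀ l : List ℤ, (∀ x ∈ l, 0 ≤ x ∧ x < n) →
      ((l : Multiset ℤ).map ((↑) : ℤ → ZMod n)).map (fun z => (z.val : ℤ)) = l := by
    intro l hl
    rw [Multiset.map_map]
    conv_rhs => rw [← Multiset.map_id (l : Multiset ℤ)]
    refine Multiset.map_congr rfl fun x hx => ?_
    rw [Function.comp_apply, ZMod.val_intCast, id]
    exact Int.emod_eq_of_lt (hl x hx).1 (hl x hx).2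
  refine Perm.eq_of_pairwise' hb hb' (Multiset.coe_eq_coe.1 ?_)
  rw [← hval b hbn, h, hval b' hbn']

theorem eq_cycRot_of_map_intCast_eq_add {n : ℕ} [NeZero n] {b b' : List ℤ}
    (hb : IsIntScoreSeq b) (hb' : IsIntScoreSeq b') (hn : b.length = n) (hn' : b'.length = n)
    {e : ℕ} (he : e ≤ n)
    (h : (b' : Multiset ℤ).map ((↑) : ℤ → ZMod n) =
      (b : Multiset ℤ).map (fun x : ℤ => (x : ZMod n) + e)) :
    b' = cycRot b (n - e) := by
  obtain ⟨ρ, hρ, hlt, hge⟩ := hb.sorted.exists_take_lt_drop_ge ((n : ℤ) - e)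
  set δ : ℤ := e + ρ - n with hδ
  -- `(cycRot b ρ).map (· + δ)` is the sorted list of representatives in `[0, n)` of `b + e`
  have hbnd : ∀ x ∈ (cycRot b ρ).map (· + δ), 0 ≤ x ∧ x < n := by
    simp only [cycRot, map_append, map_map, mem_append, mem_map, Function.comp]
    rintro _ (⟨x, hx, rfl⟩ | ⟨x, hx, rfl⟩)
    · have := hge x hx; have := (hb.bounds (mem_of_mem_drop hx)).2; omega
    · have := hlt x hx; have := (hb.bounds (mem_of_mem_take hx)).1; omega
  have hcast : (((cycRot b ρ).map (· + δ) : List ℤ) : Multiset ℤ).map ((↑) : ℤ → ZMod n) =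
      (b' : Multiset ℤ).map (↑) := by
    rw [h, ← Multiset.map_coe, Multiset.map_map,
      show ((↑) ∘ (· + δ) : ℤ → ZMod n) = fun x : ℤ => (x : ZMod n) - ((-δ : ℤ) : ZMod n) by
        ext; simp,
      map_intCast_sub_cycRot hn (by omega)]
    refine Multiset.map_congr rfl fun x _ => ?_
    simp only [hδ]
    push_cast
    rw [ZMod.natCast_self]
    ring
  have heq : (cycRot b ρ).map (· + δ) = b' :=
    eq_of_map_intCast_eq ((pairwise_cycRot hb.sorted hb.spread ρ).map _ fun _ _ h => by simpa)
      hb'.sorted hbnd (fun x hx => hn' ▸ hb'.bounds hx) hcast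
  -- both lists sum to `n.choose 2`
  have hδ0 : δ = 0 := by
    have h1 := excess_length_eq_zero_iff.1 hb'.excess_length
    have h2 := excess_cycRot_length hb.excess_length hρ
    rw [← length_cycRot b ρ, excess_length_eq_zero_iff] at h2
    rw [← heq, length_map, sum_map_add_const] at h1
    simp only [length_cycRot] at h1 h2
    rw [h2, hn] at h1
    simpa [NeZero.ne n] using h1
  rw [← heq, hδ0, show n - e = ρ by omega]
  simp

theorem eq_of_map_intCast_sub_eq {n : ℕ} [NeZero n] {b b' : List ℤ} {i i' : ℕ}
    (hb : IsIntScoreSeq b) (hb' : IsIntScoreSeq b') (hn : b.length = n) (hn' : b'.length = n)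
    (hi : i < n) (hi' : i' < n)
    (hsplit : ∀ k, 0 < k → k < n → excess b k = 0 → k ≤ i)
    (hsplit' : ∀ k, 0 < k → k < n → excess b' k = 0 → k ≤ i')
    (h : (b : Multiset ℤ).map (fun x : ℤ => (x : ZMod n) - i) =
      (b' : Multiset ℤ).map (fun x : ℤ => (x : ZMod n) - i')) :
    b = b' ∧ i = i' := by
  wlog hle : i ≤ i' generalizing b b' i i'
  · exact (this hb' hb hn' hn hi' hi hsplit' hsplit h.symm (by omega)).imp Eq.symm Eq.symm
  obtain ⟨e, rfl⟩ := Nat.exists_eq_add_of_le hle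
  have hshift : (b' : Multiset ℤ).map ((↑) : ℤ → ZMod n) =
      (b : Multiset ℤ).map (fun x : ℤ => (x : ZMod n) + e) := by
    have := congrArg (Multiset.map (· + ((i + e : ℕ) : ZMod n))) h
    simp only [Multiset.map_map, Function.comp_def, sub_add_cancel] at this
    rw [← this]
    refine Multiset.map_congr rfl fun x _ => ?_
    push_cast
    ring
  have hrot := eq_cycRot_of_map_intCast_eq_add hb hb' hn hn' (by omega) hshift
  rcases Nat.eq_zero_or_pos e with rfl | he
  · rw [Nat.sub_zero, ← hn, cycRot_length_self] at hrot
    exact ⟨hrot.symm, rfl⟩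
  · have := hsplit (n - e) (by omega) (by omega)
      (hb.excess_eq_zero_of_cycRot (hrot ▸ hb') (by omega))
    omega

theorem exists_sorted_representatives {n : ℕ} [NeZero n] (M : Multiset (ZMod n)) :
    ∃ a : List ℤ, a.Pairwise (· ≤ ·) ∧ (∀ x ∈ a, 0 ≤ x ∧ x < n) ∧
      (a : Multiset ℤ).map ((↑) : ℤ → ZMod n) = M := by
  refine ⟨(M.map fun z => (z.val : ℤ)).sort (· ≤ ·), Multiset.pairwise_sort _ _,
    fun x hx => ?_, ?_⟩
  · rw [← Multiset.mem_coe, Multiset.sort_eq] at hx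
    obtain ⟨z, -, rfl⟩ := Multiset.mem_map.1 hx
    exact ⟨by positivity, by exact_mod_cast z.val_lt⟩
  · rw [Multiset.sort_eq, Multiset.map_map]
    conv_rhs => rw [← Multiset.map_id M]
    exact Multiset.map_congr rfl fun z _ => by simp

theorem exists_isIntScoreSeq_cycRot {b : List ℤ} (hs : b.Pairwise (· ≤ ·))
    (hspread : ∀ x ∈ b, ∀ y ∈ b, x ≤ y + b.length) (hb : excess b b.length = 0) :
    ∃ r ≤ b.length, IsIntScoreSeq (cycRot b r) := by
  obtain ⟨r, hr, hmin⟩ := (Finset.range (b.length + 1)).exists_min_image (excess b) ⟨0, by simp⟩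
  rw [Finset.mem_range] at hr
  exact ⟨r, by omega,
    isIntScoreSeq_cycRot hs hspread hb (by omega) fun k hk => hmin k (by simp; omega)⟩

theorem exists_isIntScoreSeq_map_intCast_sub_eq {n : ℕ} [NeZero n] {M : Multiset (ZMod n)}
    (hM : M ∈ EGZset n) :
    ∃ b : List ℤ, ∃ i < n, IsIntScoreSeq b ∧ b.length = n ∧
      (b : Multiset ℤ).map (fun x : ℤ => (x : ZMod n) - i) = M := by
  obtain ⟨hcard, hsum⟩ := hM
  obtain ⟨a, hsorted, hbnd, haM⟩ := exists_sorted_representatives M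
  have hlen : a.length = n := by rw [← hcard, ← haM, Multiset.card_map, Multiset.coe_card]
  obtain ⟨q, hq⟩ : (n : ℤ) ∣ a.sum - (n.choose 2 : ℕ) := by
    rw [← ZMod.intCast_zmod_eq_zero_iff_dvd, Int.cast_sub, Int.cast_natCast, ← hsum, ← haM,
      ← Multiset.sum_coe, Int.cast_multiset_sum, sub_self]
  set b := a.map (· + -q)
  have hblen : b.length = n := by simp [b, hlen]
  have hbsum : excess b b.length = 0 := by
    rw [excess_length_eq_zero_iff, sum_map_add_const, length_map, hlen]
    linarith
  have hbspread : ∀ x ∈ b, ∀ y ∈ b, x ≤ y + b.length := by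
    simp only [b, mem_map, hblen]
    rintro _ ⟨x, hx, rfl⟩ _ ⟨y, hy, rfl⟩
    have := (hbnd x hx).2; have := (hbnd y hy).1
    omega
  obtain ⟨r, hr, hrot⟩ := exists_isIntScoreSeq_cycRot
    (hsorted.map _ fun _ _ h => by simpa using h) hbspread hbsum
  refine ⟨cycRot b r, (-((q + r : ℤ) : ZMod n)).val, ZMod.val_lt _, hrot, by simp [hblen], ?_⟩
  rw [map_intCast_sub_cycRot hblen (hblen ▸ hr), ← haM, Multiset.map_coe, Multiset.map_coe, map_map]
  congr 1
  refine map_congr_left fun x _ => ?_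
  simp only [Function.comp, ZMod.natCast_zmod_val]
  push_cast
  ring

theorem exists_mem_Lset {n : ℕ} [NeZero n] {b : List ℤ} {i : ℕ} (hb : IsIntScoreSeq b)
    (hn : b.length = n) (hi : i < n) :
    ∃ s i', (s, i') ∈ Lset n ∧
      ((s.map (↑) : List ℤ) : Multiset ℤ).map (fun x : ℤ => (x : ZMod n) - i') =
        (b : Multiset ℤ).map (fun x : ℤ => (x : ZMod n) - i) := by
  induction hd : n - i using Nat.strong_induction_on generalizing b i with
  | _ d ih =>
  by_cases hsplit : ∃ k, 0 < k ∧ k < n ∧ excess b k = 0 ∧ i < k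
  · obtain ⟨k, hk0, hkn, hk, hik⟩ := hsplit
    obtain ⟨s, i', hmem, heq⟩ := ih (k - i) (by omega)
      (isIntScoreSeq_cycRot hb.sorted hb.spread hb.excess_length (by omega)
        fun j hj => hk ▸ hb.excess_nonneg j hj) (by simp [hn]) (i := i + n - k) (by omega)
      (by omega)
    refine ⟨s, i', hmem, heq.trans ?_⟩
    rw [map_intCast_sub_cycRot hn hkn.le]
    refine Multiset.map_congr rfl fun x _ => ?_
    rw [Nat.cast_sub (by omega)]
    push_cast
    rw [ZMod.natCast_self]
    ring
  · have hs : (b.map Int.toNat).map ((↑) : ℕ → ℤ) = b := by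
      rw [map_map]
      conv_rhs => rw [← map_id b]
      exact map_congr_left fun x hx => Int.toNat_of_nonneg (hb.bounds hx).1
    refine ⟨b.map Int.toNat, i, mem_Lset_iff.2 ⟨by rw [hs]; exact hb, by simp [hn], hi, ?_⟩,
      by rw [hs]⟩
    rw [hs]
    exact fun k hk0 hkn hk => not_lt.1 fun hik => hsplit ⟨k, hk0, hkn, hk, hik⟩

theorem map_sub_coe_eq {n : ℕ} (s : List ℕ) (i : ℕ) :
    Multiset.map (fun x => ((x : ZMod n) - (i : ZMod n))) (↑s : Multiset ℕ) =
      ((s.map (↑) : List ℤ) : Multiset ℤ).map (fun x : ℤ => (x : ZMod n) - i) := by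
  simp [Function.comp_def]

theorem map_intCast_sub_mem_EGZset {n : ℕ} {b : List ℤ} (hb : IsIntScoreSeq b)
    (hn : b.length = n) (i : ℕ) :
    (b : Multiset ℤ).map (fun x : ℤ => (x : ZMod n) - i) ∈ EGZset n := by
  have hsum := excess_length_eq_zero_iff.1 hb.excess_length
  refine ⟨by simp [hn], ?_⟩
  rw [Multiset.sum_map_sub, Multiset.map_const', Multiset.sum_replicate, Multiset.coe_card, hn,
    nsmul_eq_mul, ZMod.natCast_self, zero_mul, sub_zero, ← Int.cast_multiset_sum,
    Multiset.sum_coe, hsum, hn, Int.cast_natCast]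

theorem count_zero_map_intCast_sub {n : ℕ} [NeZero n] {b : List ℤ}
    (hb : ∀ x ∈ b, 0 ≤ x ∧ x < n) {i : ℕ} (hi : i < n) :
    Multiset.count 0 ((b : Multiset ℤ).map (fun x : ℤ => (x : ZMod n) - i)) = b.count (i : ℤ) := by
  rw [Multiset.count_map, ← Multiset.coe_count, Multiset.count_eq_card_filter_eq]
  congr 1
  refine Multiset.filter_congr fun x hx => ?_
  have hx := hb x hx
  rw [eq_comm, sub_eq_zero, ← Int.cast_natCast]
  constructor
  · intro h
    have := congrArg (fun z : ZMod n => (z.val : ℤ)) h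
    simp only [ZMod.val_intCast] at this
    rwa [Int.emod_eq_of_lt hx.1 hx.2, Int.emod_eq_of_lt (by omega) (by omega), eq_comm] at this
  · rintro rfl
    rfl

end ScoreSeq

open ScoreSeq in
/-- The map `f(s, i) = μ(s - i)` is a bijection from `L_n` onto `EGZ_n`, and the
multiplicity of `0` in `f(s,i)` equals the number of indices `j` with `s_j = i`. -/
theorem lastSummand_bijection (n : ℕ) (hn : 1 ≤ n) :
    Set.BijOn
      (fun p : List ℕ × ℕ =>
        Multiset.map (fun x => ((x : ZMod n) - (p.2 : ZMod n))) (↑p.1 : Multiset ℕ))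
      (Lset n) (EGZset n) ∧
    ∀ p ∈ Lset n,
      Multiset.count (0 : ZMod n)
        (Multiset.map (fun x => ((x : ZMod n) - (p.2 : ZMod n))) (↑p.1 : Multiset ℕ)) =
      p.1.count p.2 := by
  have : NeZero n := ⟨by omega⟩
  simp only [map_sub_coe_eq]
  refine ⟨⟨fun ⟨s, i⟩ hp => ?_, fun ⟨s, i⟩ hp ⟨s', i'⟩ hp' h => ?_, fun M hM => ?_⟩,
    fun ⟨s, i⟩ hp => ?_⟩
  · obtain ⟨hs, hlen, -⟩ := mem_Lset_iff.1 hp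
    exact map_intCast_sub_mem_EGZset hs (by simp [hlen]) i
  · obtain ⟨hs, hlen, hi, hsplit⟩ := mem_Lset_iff.1 hp
    obtain ⟨hs', hlen', hi', hsplit'⟩ := mem_Lset_iff.1 hp'
    obtain ⟨hss', rfl⟩ := eq_of_map_intCast_sub_eq hs hs' (by simp [hlen]) (by simp [hlen'])
      hi hi' hsplit hsplit' h
    rw [List.map_injective_iff.2 Nat.cast_injective hss']
  · obtain ⟨b, i, hi, hb, hbn, rfl⟩ := exists_isIntScoreSeq_map_intCast_sub_eq hM
    obtain ⟨s, i', hmem, heq⟩ := exists_mem_Lset hb hbn hi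
    exact ⟨(s, i'), hmem, heq⟩
  · obtain ⟨hs, hlen, hi, -⟩ := mem_Lset_iff.1 hp
    rw [count_zero_map_intCast_sub (fun x hx => by simpa [hlen] using hs.bounds hx) hi,
      List.count_map_of_injective _ _ Nat.cast_injective]
end

section
/- The number of multisets of size n-1 with elements in Z/nZ whose sum is congruent to binomial(n,2) modulo n equals the Catalan number C_{n-1} = binomial(2n-2, n-1)/n. -/
/-!
Translating a multiset of size `n - 1` over a group `G` of order `n` by `c` changes its sum by
`(n - 1) • c = -c`. Hence `(M, c) ↦ M + c` is a bijection from (multisets of size `n - 1` with a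
prescribed sum `t`) × `G` onto all multisets of size `n - 1`, so every sum `t` is attained by
exactly `multichoose n (n - 1) / n = binomial (2n - 2) (n - 1) / n = C_{n-1}` of them.
-/

theorem Multiset.sum_map_add_const {α : Type*} [AddCommMonoid α] (M : Multiset α) (c : α) :
    (M.map (· + c)).sum = M.sum + card M • c := by
  rw [sum_map_add, map_id', map_const', sum_replicate]

section FixedSum

variable {G : Type*} [AddCommGroup G] [Fintype G]

theorem Multiset.sum_map_add_const_of_card_eq_card_sub_one {M : Multiset G}
    (hM : card M = Fintype.card G - 1) (c : G) : (M.map (· + c)).sum = M.sum - c := by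
  have hcard : (Fintype.card G - 1) • c = -c := by
    rw [eq_neg_iff_add_eq_zero, ← succ_nsmul,
      Nat.sub_add_cancel Fintype.card_pos, card_nsmul_eq_zero]
  rw [Multiset.sum_map_add_const, hM, hcard, sub_eq_add_neg]

def fixedSumProdEquivSym (t : G) :
    {M : Multiset G // Multiset.card M = Fintype.card G - 1 ∧ M.sum = t} × G ≃
      Sym G (Fintype.card G - 1) where
  toFun p := ⟨p.1.1.map (· + p.2), by simp [p.1.2.1]⟩
  invFun s := (⟨s.1.map (· + (s.1.sum - t)), by simp,
      by rw [Multiset.sum_map_add_const_of_card_eq_card_sub_one s.2, sub_sub_cancel]⟩,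
    t - s.1.sum)
  left_inv := by
    rintro ⟨⟨M, hM, rfl⟩, c⟩
    simp [Multiset.sum_map_add_const_of_card_eq_card_sub_one hM, Multiset.map_map]
  right_inv := by
    rintro ⟨s, hs⟩
    apply Subtype.ext
    simp [Multiset.map_map, add_assoc]

theorem card_fixedSum_mul_card (t : G) :
    Nat.card {M : Multiset G // Multiset.card M = Fintype.card G - 1 ∧ M.sum = t} *
        Fintype.card G = (2 * (Fintype.card G - 1)).choose (Fintype.card G - 1) := by
  classical
  have hsym := Nat.card_congr (fixedSumProdEquivSym t)
  obtain ⟨k, hk⟩ := Nat.exists_eq_add_one_of_ne_zero (Fintype.card_ne_zero (α := G))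
  rw [Nat.card_prod, Nat.card_eq_fintype_card (α := G),
    Nat.card_eq_fintype_card (α := Sym G _), Sym.card_sym_eq_choose] at hsym
  rw [hsym, hk, Nat.add_sub_cancel, two_mul, Nat.add_right_comm, Nat.add_sub_cancel]

theorem card_fixedSum_eq_catalan (t : G) :
    Nat.card {M : Multiset G // Multiset.card M = Fintype.card G - 1 ∧ M.sum = t} =
      catalan (Fintype.card G - 1) := by
  apply Nat.eq_of_mul_eq_mul_right (Fintype.card_pos (α := G))
  obtain ⟨k, hk⟩ := Nat.exists_eq_add_one_of_ne_zero (Fintype.card_ne_zero (α := G))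
  rw [card_fixedSum_mul_card, hk, Nat.add_sub_cancel, ← Nat.centralBinom_eq_two_mul_choose,
    ← succ_mul_catalan_eq_centralBinom, mul_comm]

end FixedSum

/-- The number of multisets of size `n-1` over `ZMod n` with sum `binom n 2` is the
Catalan number `C_{n-1}`. -/
theorem egz_sub_one_card_eq_catalan (n : ℕ) (hn : 1 ≤ n) :
    Nat.card {M : Multiset (ZMod n) //
        Multiset.card M = n - 1 ∧ M.sum = (n.choose 2 : ZMod n)} =
      catalan (n - 1) := by
  have : NeZero n := ⟨by omega⟩
  simpa only [ZMod.card] using card_fixedSum_eq_catalan (G := ZMod n) (n.choose 2 : ZMod n)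
end

section
/- The number of multisets in EGZ_n that contain at least one zero equals the Catalan number C_{n-1} = binomial(2n-2, n-1)/n. -/
/-!
Removing one zero identifies the multisets in question with the `(n-1)`-multisets over `ZMod n`
with prescribed sum. Translating every element by `c` changes the sum of an `(n-1)`-multiset
by `(n-1) • c = -c`, so the `n` fibres of the sum map are equinumerous, and each has
`centralBinom (n-1) / n = catalan (n-1)` elements, whatever the prescribed sum.
-/

open Multiset

abbrev SumFiber (α : Type*) [AddCommMonoid α] (k : ℕ) (s : α) : Type _ :=
  {M : Sym α k // (M : Multiset α).sum = s}

namespace SumFiber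

def translate {α : Type*} [AddCommGroup α] (k : ℕ) (s c : α) :
    SumFiber α k s ≃ SumFiber α k (s + k • c) :=
  (Sym.equivCongr (Equiv.addRight c)).subtypeEquiv fun M => by
    simp [Sym.equivCongr, Sym.coe_map]

def consZeroEquiv {α : Type*} [AddCommMonoid α] [DecidableEq α] (k : ℕ) (s : α) :
    SumFiber α k s ≃ {M : Multiset α // card M = k + 1 ∧ M.sum = s ∧ 0 ∈ M} where
  toFun M := ⟨0 ::ₘ (M : Multiset α), by simp, by simpa using M.2, mem_cons_self _ _⟩
  invFun M := ⟨⟨M.1.erase 0, by rw [card_erase_of_mem M.2.2.2, M.2.1]; rfl⟩, by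
    have := M.2.2.1
    rwa [← cons_erase M.2.2.2, sum_cons, zero_add] at this⟩
  left_inv M := by ext : 2; simp
  right_inv M := Subtype.ext (cons_erase M.2.2.2)

variable {n k : ℕ} [NeZero n]

lemma card_eq_of_isUnit (hk : IsUnit (k : ZMod n)) (s t : ZMod n) :
    Fintype.card (SumFiber (ZMod n) k s) = Fintype.card (SumFiber (ZMod n) k t) := by
  obtain ⟨c, rfl⟩ : ∃ c : ZMod n, t = s + k • c :=
    ⟨hk.unit⁻¹ * (t - s), by rw [nsmul_eq_mul, ← mul_assoc, IsUnit.mul_val_inv, one_mul]; ring⟩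
  exact Fintype.card_congr (translate k s c)

lemma mul_card_eq_card_sym (hk : IsUnit (k : ZMod n)) (s : ZMod n) :
    n * Fintype.card (SumFiber (ZMod n) k s) = Fintype.card (Sym (ZMod n) k) := by
  rw [← Fintype.card_congr
    (Equiv.sigmaFiberEquiv fun M : Sym (ZMod n) k => (M : Multiset (ZMod n)).sum),
    Fintype.card_sigma]
  simp_rw [card_eq_of_isUnit hk _ s]
  simp

lemma card_pred_eq_catalan (s : ZMod (k + 1)) :
    Fintype.card (SumFiber (ZMod (k + 1)) k s) = catalan k := by
  have hk : (k : ZMod (k + 1)) = -1 := by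
    rw [eq_neg_iff_add_eq_zero]; exact_mod_cast ZMod.natCast_self (k + 1)
  have h := mul_card_eq_card_sym (hk ▸ isUnit_one.neg) s
  rw [Sym.card_sym_eq_choose, ZMod.card, show k + 1 + k - 1 = 2 * k by omega,
    ← Nat.centralBinom, ← succ_mul_catalan_eq_centralBinom] at h
  exact Nat.eq_of_mul_eq_mul_left k.succ_pos h

end SumFiber

/-- The number of multisets in `EGZ_n` containing at least one zero is the Catalan
number `C_{n-1}`. -/
theorem egz_with_zero_card_eq_catalan (n : ℕ) (hn : 1 ≤ n) :
    Nat.card {M : Multiset (ZMod n) //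
        Multiset.card M = n ∧ M.sum = (n.choose 2 : ZMod n) ∧ (0 : ZMod n) ∈ M} =
      catalan (n - 1) := by
  obtain ⟨k, rfl⟩ : ∃ k, n = k + 1 := ⟨n - 1, by omega⟩
  rw [← Nat.card_congr (SumFiber.consZeroEquiv k _), Nat.card_eq_fintype_card,
    Nat.add_sub_cancel]
  exact SumFiber.card_pred_eq_catalan _
end

section
/- Let (a_n)_{n≥0} and (b_n)_{n≥1} satisfy a_0 = 1 and n·a_n = Σ_{k=1}^{n} a_{n-k} b_k for all n ≥ 1. Then a_n = Σ over all (m_1,...,m_n) with 1·m_1 + 2·m_2 + ... + n·m_n = n of Π_{j=1}^{n} b_j^{m_j} / (j^{m_j} · m_j!). -/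
/-!
The right-hand side is the cycle index `Z_n(b) = ∑_m ∏_j b_j^{m_j} / (j^{m_j} m_j!)` of the
symmetric group. It satisfies the same recurrence as `a`: writing `n = ∑_j j m_j` and pointing at
one part of size `j`, `j m_j · term(m) = b_j · term(m - e_j)`, so `n Z_n = ∑_j b_j Z_{n-j}`.
Since `n` is invertible in a `ℚ`-algebra, the recurrence and `a_0 = 1` determine `a`.
Multiplicity vectors of every weight `≤ n` are kept in the one type `Fin n → ℕ`.
-/

open Finset

namespace CycleIndex

/-- `m j` is the number of parts of size `j + 1`. -/
def weight {N : ℕ} (m : Fin N → ℕ) : ℕ := ∑ j, (j.val + 1) * m j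

def multiplicities (N n : ℕ) : Finset (Fin N → ℕ) :=
  (Fintype.piFinset fun _ : Fin N => range (N + 1)).filter (fun m => weight m = n)

lemma mul_le_weight {N : ℕ} (m : Fin N → ℕ) (j : Fin N) : (j.val + 1) * m j ≤ weight m :=
  single_le_sum (f := fun i : Fin N => (i.val + 1) * m i) (fun _ _ => Nat.zero_le _) (mem_univ j)

lemma le_weight {N : ℕ} (m : Fin N → ℕ) (j : Fin N) : m j ≤ weight m :=
  (Nat.le_mul_of_pos_left _ j.val.succ_pos).trans (mul_le_weight m j)

lemma weight_add_single {N : ℕ} (m : Fin N → ℕ) (j : Fin N) :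
    weight (m + Pi.single j 1) = weight m + (j.val + 1) := by
  simp [weight, mul_add, sum_add_distrib, Pi.single_apply]

lemma mem_multiplicities {N n : ℕ} (hn : n ≤ N) {m : Fin N → ℕ} :
    m ∈ multiplicities N n ↔ weight m = n := by
  refine ⟨fun h => (mem_filter.1 h).2, fun h => mem_filter.2 ⟨?_, h⟩⟩
  exact Fintype.mem_piFinset.2 fun j => mem_range.2 (by have := le_weight m j; omega)

lemma multiplicities_zero (N : ℕ) : multiplicities N 0 = {0} := by
  ext m
  rw [mem_multiplicities N.zero_le, mem_singleton]
  refine ⟨fun h => funext fun j => by have := le_weight m j; simp; omega, ?_⟩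
  rintro rfl
  simp [weight]

variable {R : Type*} [CommRing R] [Algebra ℚ R]

def factor (b : ℕ → R) (d k : ℕ) : R :=
  b d ^ k * algebraMap ℚ R ((d : ℚ) ^ k * (k.factorial : ℚ))⁻¹

def term (b : ℕ → R) {N : ℕ} (m : Fin N → ℕ) : R :=
  ∏ j, factor b (j.val + 1) (m j)

lemma term_eq (b : ℕ → R) {N : ℕ} (m : Fin N → ℕ) :
    term b m = (∏ j, b (j.val + 1) ^ m j) *
      algebraMap ℚ R (∏ j : Fin N, (((j.val + 1 : ℕ) : ℚ) ^ m j * (m j).factorial)⁻¹) := by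
  simp only [term, factor, prod_mul_distrib, map_prod]

lemma term_zero (b : ℕ → R) (N : ℕ) : term b (0 : Fin N → ℕ) = 1 := by
  simp [term, factor]

lemma natCast_mul_factor_succ (b : ℕ → R) {d : ℕ} (hd : d ≠ 0) (k : ℕ) :
    ((d * (k + 1) : ℕ) : R) * factor b d (k + 1) = b d * factor b d k := by
  have hq : ((d * (k + 1) : ℕ) : ℚ) * ((d : ℚ) ^ (k + 1) * ((k + 1).factorial : ℚ))⁻¹ =
      ((d : ℚ) ^ k * (k.factorial : ℚ))⁻¹ := by
    rw [Nat.factorial_succ]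
    push_cast
    field_simp
    ring
  simp only [factor, ← map_natCast (algebraMap ℚ R), ← hq, map_mul]
  ring

lemma term_eq_factor_mul (b : ℕ → R) {N : ℕ} (m : Fin N → ℕ) (j : Fin N) :
    term b m = factor b (j.val + 1) (m j) * ∏ i ∈ univ.erase j, factor b (i.val + 1) (m i) :=
  (mul_prod_erase _ _ (mem_univ j)).symm

/-- Pointing at one of the `m_j + 1` parts of size `j + 1` removes it. -/
lemma natCast_mul_term_add_single (b : ℕ → R) {N : ℕ} (m : Fin N → ℕ) (j : Fin N) :
    (((j.val + 1) * (m j + 1) : ℕ) : R) * term b (m + Pi.single j 1) = b (j.val + 1) * term b m := by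
  have hrest : ∏ i ∈ univ.erase j, factor b (i.val + 1) ((m + Pi.single j 1 : Fin N → ℕ) i) =
      ∏ i ∈ univ.erase j, factor b (i.val + 1) (m i) :=
    prod_congr rfl fun i hi => by simp [Pi.single_eq_of_ne (ne_of_mem_erase hi)]
  rw [term_eq_factor_mul b _ j, term_eq_factor_mul b m j, hrest, ← mul_assoc, ← mul_assoc]
  simp only [Pi.add_apply, Pi.single_eq_same]
  rw [natCast_mul_factor_succ b j.val.succ_ne_zero]

def cycleIndex (b : ℕ → R) (N n : ℕ) : R := ∑ m ∈ multiplicities N n, term b m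

lemma sum_natCast_mul_term_of_le (b : ℕ → R) {N n : ℕ} (hn : n ≤ N) {j : Fin N}
    (hj : j.val + 1 ≤ n) :
    ∑ m ∈ multiplicities N n, (((j.val + 1) * m j : ℕ) : R) * term b m =
      cycleIndex b N (n - (j.val + 1)) * b (j.val + 1) := by
  have hpoint (m : Fin N → ℕ) : term b m * b (j.val + 1) =
      (((j.val + 1) * (m + Pi.single j 1 : Fin N → ℕ) j : ℕ) : R) * term b (m + Pi.single j 1) := by
    simp only [Pi.add_apply, Pi.single_eq_same]
    rw [natCast_mul_term_add_single, mul_comm]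
  rw [cycleIndex, sum_mul]
  symm
  refine sum_bij_ne_zero (fun m _ _ => m + Pi.single j 1) ?_ ?_ ?_ fun m _ _ => hpoint m
  · intro m hm _
    rw [mem_multiplicities (by omega)] at hm
    rw [mem_multiplicities hn, weight_add_single, hm]
    omega
  · intro m₁ _ _ m₂ _ _ h
    exact add_right_cancel h
  · intro m hm hne
    have hmj : m j ≠ 0 := fun h => hne (by simp [h])
    have hsplit : m - Pi.single j 1 + Pi.single j 1 = m := by
      funext i
      by_cases hij : i = j
      · subst hij
        simp only [Pi.add_apply, Pi.sub_apply, Pi.single_eq_same]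
        omega
      · simp [Pi.single_eq_of_ne hij]
    refine ⟨m - Pi.single j 1, ?_, ?_, hsplit⟩
    · rw [mem_multiplicities hn] at hm
      have := weight_add_single (m - Pi.single j 1) j
      rw [mem_multiplicities (by omega)]
      rw [hsplit] at this
      omega
    · rwa [hpoint, hsplit]

lemma sum_natCast_mul_term_of_lt (b : ℕ → R) {N n : ℕ} (hn : n ≤ N) {j : Fin N}
    (hj : n < j.val + 1) :
    ∑ m ∈ multiplicities N n, (((j.val + 1) * m j : ℕ) : R) * term b m = 0 := by
  refine sum_eq_zero fun m hm => ?_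
  rw [mem_multiplicities hn] at hm
  have := mul_le_weight m j
  have hmj : m j = 0 := by
    by_contra h
    have := Nat.le_mul_of_pos_right (j.val + 1) (Nat.pos_of_ne_zero h)
    omega
  simp [hmj]

lemma sum_fin_ite_eq_sum_Icc {M : Type*} [AddCommMonoid M] (g : ℕ → M) {N n : ℕ} (hn : n ≤ N) :
    ∑ j : Fin N, (if j.val + 1 ≤ n then g (j.val + 1) else 0) = ∑ k ∈ Icc 1 n, g k := by
  have hfilter : (range N).filter (fun j => j + 1 ≤ n) = range n := by
    ext j; simp only [mem_filter, mem_range]; omega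
  rw [Fin.sum_univ_eq_sum_range (fun j => if j + 1 ≤ n then g (j + 1) else 0), ← sum_filter,
    hfilter, ← Ico_add_one_right_eq_Icc, sum_Ico_eq_sum_range]
  simp only [Nat.add_sub_cancel, add_comm 1]

lemma natCast_mul_cycleIndex (b : ℕ → R) {N n : ℕ} (hn : n ≤ N) :
    (n : R) * cycleIndex b N n = ∑ k ∈ Icc 1 n, cycleIndex b N (n - k) * b k := by
  have hweight : ∀ m ∈ multiplicities N n,
      (n : R) * term b m = ∑ j, (((j.val + 1) * m j : ℕ) : R) * term b m := by
    intro m hm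
    rw [← sum_mul, ← Nat.cast_sum, ← weight, (mem_multiplicities hn).1 hm]
  rw [cycleIndex, mul_sum, sum_congr rfl hweight, sum_comm,
    ← sum_fin_ite_eq_sum_Icc (fun k => cycleIndex b N (n - k) * b k) hn]
  refine sum_congr rfl fun j _ => ?_
  split_ifs with hj
  · exact sum_natCast_mul_term_of_le b hn hj
  · exact sum_natCast_mul_term_of_lt b hn (not_le.1 hj)

lemma isUnit_natCast_of_ne_zero {n : ℕ} (hn : n ≠ 0) : IsUnit (n : R) := by
  simpa using (Nat.cast_ne_zero.2 hn : (n : ℚ) ≠ 0).isUnit.map (algebraMap ℚ R)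

lemma eq_cycleIndex_of_recurrence (a b : ℕ → R) (h0 : a 0 = 1)
    (hrec : ∀ n, 1 ≤ n → n • a n = ∑ k ∈ Icc 1 n, a (n - k) * b k) {N n : ℕ} (hn : n ≤ N) :
    a n = cycleIndex b N n := by
  induction n using Nat.strong_induction_on with
  | _ n ih =>
    rcases Nat.eq_zero_or_pos n with rfl | hpos
    · rw [h0, cycleIndex, multiplicities_zero, sum_singleton, term_zero]
    · refine (isUnit_natCast_of_ne_zero hpos.ne').mul_left_cancel ?_
      rw [← nsmul_eq_mul, hrec n hpos, natCast_mul_cycleIndex b hn]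
      refine sum_congr rfl fun k hk => ?_
      rw [mem_Icc] at hk
      rw [ih (n - k) (by omega) (by omega)]

end CycleIndex

theorem log_pointing_partition_formula_general {R : Type*} [CommRing R] [Algebra ℚ R]
    (a b : ℕ → R) (h0 : a 0 = 1)
    (hrec : ∀ n, 1 ≤ n → n • a n = ∑ k ∈ Finset.Icc 1 n, a (n - k) * b k)
    (n : ℕ) :
    a n = ∑ m ∈ (Fintype.piFinset fun _ : Fin n => Finset.range (n + 1)).filter
        (fun m => ∑ j, (j.val + 1) * m j = n),
      (∏ j, b (j.val + 1) ^ m j) *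
        algebraMap ℚ R (∏ j : Fin n,
          (((j.val + 1 : ℕ) : ℚ) ^ m j * (Nat.factorial (m j) : ℚ))⁻¹) := by
  rw [CycleIndex.eq_cycleIndex_of_recurrence a b h0 hrec le_rfl, CycleIndex.cycleIndex]
  exact Finset.sum_congr rfl fun m _ => CycleIndex.term_eq b m

/-- If `a₀ = 1` and `n·aₙ = ∑_{k=1}^n a_{n-k} b_k`, then
`aₙ = ∑_{∑ j·m_j = n} ∏_j b_j^{m_j} / (j^{m_j}·m_j!)`. -/
theorem log_pointing_partition_formula {R : Type*} [CommRing R] [Algebra ℚ R]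
    (a b : ℕ → R) (h0 : a 0 = 1)
    (hrec : ∀ n, 1 ≤ n → n • a n = ∑ k ∈ Finset.Icc 1 n, a (n - k) * b k)
    (n : ℕ) (hn : 1 ≤ n) :
    a n = ∑ m ∈ (Fintype.piFinset fun _ : Fin n => Finset.range (n + 1)).filter
        (fun m => ∑ j, (j.val + 1) * m j = n),
      (∏ j, b (j.val + 1) ^ m j) *
        algebraMap ℚ R (∏ j : Fin n,
          (((j.val + 1 : ℕ) : ℚ) ^ m j * (Nat.factorial (m j) : ℚ))⁻¹) :=
  log_pointing_partition_formula_general a b h0 hrec n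
end

section
/- A nondecreasing sequence of nonnegative integers s = (s_0, ..., s_{n-1}) is the score sequence of some tournament on n vertices (i.e., the sorted out-degree sequence of an orientation of the complete graph K_n) if and only if s_0 + ... + s_{k-1} ≥ binomial(k,2) for all 1 ≤ k ≤ n, with equality for k = n. -/
/-!
Necessity is double counting: the pairs inside a set `A` of vertices contribute exactly
`(#A).choose 2` to the out-degrees of the vertices of `A`.

For sufficiency, give each vertex `v` exactly `s v` slots and match every unordered pair of vertices
to a slot of one of its endpoints, who then wins the pair. A family `F` of pairs covering the
vertex set `W` satisfies `#F ≤ (#W).choose 2 ≤ ∑ v ∈ W, s v`, which is Hall's condition; since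
there are as many slots as pairs, the matching is perfect and `v` wins exactly `s v` pairs.
For monotone `s` the prefix inequalities imply those for all vertex sets, as the prefix of length
`k` has the least sum among the `k`-sets.
-/

open Finset

theorem Finset.sum_le_sum_of_card_eq_of_forall_le {ι M : Type*} [AddCommMonoid M] [LinearOrder M]
    [IsOrderedAddMonoid M] {X Y : Finset ι} {f : ι → M} (hXY : #X = #Y)
    (h : ∀ x ∈ X, ∀ y ∈ Y, f x ≤ f y) : ∑ x ∈ X, f x ≤ ∑ y ∈ Y, f y := by
  obtain rfl | hX := X.eq_empty_or_nonempty
  · rw [card_empty, eq_comm, card_eq_zero] at hXY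
    simp [hXY]
  obtain ⟨x₀, hx₀, hmax⟩ := X.exists_max_image f hX
  calc ∑ x ∈ X, f x ≤ #X • f x₀ := sum_le_card_nsmul _ _ _ hmax
    _ = #Y • f x₀ := by rw [hXY]
    _ ≤ ∑ y ∈ Y, f y := card_nsmul_le_sum _ _ _ fun y hy => h x₀ hx₀ y hy

theorem Monotone.sum_le_sum_of_isLowerSet {ι M : Type*} [LinearOrder ι] [DecidableEq ι]
    [AddCommMonoid M] [LinearOrder M] [IsOrderedCancelAddMonoid M] {f : ι → M} (hf : Monotone f)
    {P A : Finset ι} (hP : IsLowerSet (P : Set ι)) (hcard : #P = #A) :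
    ∑ i ∈ P, f i ≤ ∑ i ∈ A, f i := by
  rw [← sum_sdiff_le_sum_sdiff]
  refine sum_le_sum_of_card_eq_of_forall_le (card_sdiff_comm hcard) fun b hb a ha => hf ?_
  exact le_of_not_ge fun hab => (mem_sdiff.1 ha).2 (hP hab (mem_sdiff.1 hb).1)

theorem forall_choose_le_sum_iff_of_monotone {n : ℕ} {s : Fin n → ℕ} (hs : Monotone s) :
    (∀ A : Finset (Fin n), (#A).choose 2 ≤ ∑ i ∈ A, s i) ↔
      ∀ k : ℕ, 1 ≤ k → k ≤ n →
        k.choose 2 ≤ ∑ i ∈ univ.filter (fun i : Fin n => i.val < k), s i := by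
  have card_prefix (k : ℕ) (hk : k ≤ n) : #{i : Fin n | i.val < k} = k := by
    rw [Fin.card_filter_val_lt, min_eq_right hk]
  refine ⟨fun h k _ hk => by simpa only [card_prefix k hk] using h {i | i.val < k}, fun h A => ?_⟩
  obtain h0 | hpos := Nat.eq_zero_or_pos #A
  · simp [h0]
  have hA : #A ≤ n := (card_le_univ A).trans_eq (Fintype.card_fin n)
  refine (h _ hpos hA).trans (hs.sum_le_sum_of_isLowerSet ?_ (card_prefix _ hA))
  intro i j hji hj
  simp only [coe_filter, mem_univ, true_and, Set.mem_ofPred_eq] at hj ⊢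
  exact lt_of_le_of_lt hji hj

section Tournament

variable {V : Type*}

def IsTournament (T : V → V → Bool) : Prop :=
  (∀ i, T i i = false) ∧ ∀ i j, i ≠ j → T i j = !T j i

def outdeg [Fintype V] (T : V → V → Bool) (v : V) : ℕ := #{j | T v j = true}

theorem outdeg_comp_perm [Fintype V] (T : V → V → Bool) (e : Equiv.Perm V) (i : V) :
    outdeg (fun i j => T (e i) (e j)) i = outdeg T (e i) :=
  card_equiv e (by simp)

namespace IsTournament

variable {T : V → V → Bool}

theorem comp_perm (hT : IsTournament T) (e : Equiv.Perm V) :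
    IsTournament fun i j => T (e i) (e j) :=
  ⟨fun i => hT.1 (e i), fun _ _ hij => hT.2 _ _ (e.injective.ne hij)⟩

variable [DecidableEq V]

theorem ite_add_ite_swap (hT : IsTournament T) (i j : V) :
    ((if T i j = true then 1 else 0) + if T j i = true then 1 else 0) = if i = j then 0 else 1 := by
  by_cases hij : i = j
  · simp [hij, hT.1]
  · rw [hT.2 i j hij]
    cases T j i <;> simp [hij]

theorem sum_card_filter_eq_choose_two (hT : IsTournament T) (A : Finset V) :
    ∑ i ∈ A, #{j ∈ A | T i j = true} = (#A).choose 2 := by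
  have hswap : ∑ i ∈ A, ∑ j ∈ A, (if T j i = true then 1 else 0)
      = ∑ i ∈ A, ∑ j ∈ A, (if T i j = true then 1 else 0) := sum_comm
  have hdouble : ∑ i ∈ A, ∑ j ∈ A, ((if T i j = true then 1 else 0) + if T j i = true then 1 else 0)
      = #A * (#A - 1) := by
    simp_rw [hT.ite_add_ite_swap, ← smul_eq_mul, ← sum_const]
    refine sum_congr rfl fun i hi => ?_
    simp [sum_ite, filter_ne, card_erase_of_mem hi]
  simp_rw [card_filter]
  rw [Nat.choose_two_right, ← hdouble]
  simp_rw [sum_add_distrib, hswap]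
  omega

variable [Fintype V]

theorem choose_card_le_sum_outdeg (hT : IsTournament T) (A : Finset V) :
    (#A).choose 2 ≤ ∑ i ∈ A, outdeg T i :=
  hT.sum_card_filter_eq_choose_two A ▸
    sum_le_sum fun _ _ => card_le_card (filter_subset_filter _ (subset_univ A))

theorem sum_outdeg (hT : IsTournament T) : ∑ i, outdeg T i = (Fintype.card V).choose 2 :=
  hT.sum_card_filter_eq_choose_two univ

end IsTournament

variable [DecidableEq V]

def ofWinner (w : {z : Sym2 V // ¬z.IsDiag} → V) (i j : V) : Bool :=
  if h : i = j then false else decide (w ⟨s(i, j), Sym2.mk_isDiag_iff.not.2 h⟩ = i)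

variable {w : {z : Sym2 V // ¬z.IsDiag} → V}

theorem isTournament_ofWinner (hw : ∀ z, w z ∈ z.1) : IsTournament (ofWinner w) := by
  refine ⟨fun i => by simp [ofWinner], fun i j hij => ?_⟩
  have hswap : (⟨s(j, i), Sym2.mk_isDiag_iff.not.2 hij.symm⟩ : {z : Sym2 V // ¬z.IsDiag})
      = ⟨s(i, j), Sym2.mk_isDiag_iff.not.2 hij⟩ := Subtype.ext Sym2.eq_swap
  simp only [ofWinner, dif_neg hij, dif_neg (Ne.symm hij), hswap]
  rcases Sym2.mem_iff.1 (hw ⟨s(i, j), Sym2.mk_isDiag_iff.not.2 hij⟩) with h | h <;>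
    simp [h, hij, Ne.symm hij]

theorem outdeg_ofWinner [Fintype V] (hw : ∀ z, w z ∈ z.1) (v : V) :
    outdeg (ofWinner w) v = #{z | w z = v} := by
  have mem_iff (j : V) : ofWinner w v j = true ↔
      ∃ h : v ≠ j, w ⟨s(v, j), Sym2.mk_isDiag_iff.not.2 h⟩ = v := by
    by_cases h : v = j <;> simp [ofWinner, h]
  refine card_bij
    (fun j hj => ⟨s(v, j), Sym2.mk_isDiag_iff.not.2 ((mem_iff j).1 (mem_filter.1 hj).2).1⟩)
    (fun j hj => ?_) (fun j₁ _ j₂ _ h => Sym2.congr_right.1 (congrArg Subtype.val h)) ?_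
  · obtain ⟨_, hwin⟩ := (mem_iff j).1 (mem_filter.1 hj).2
    simpa using hwin
  · rintro ⟨z, hz⟩ hwz
    have hvz : v ∈ z := (mem_filter.1 hwz).2 ▸ hw ⟨z, hz⟩
    obtain ⟨j, rfl⟩ : ∃ j, z = s(v, j) := ⟨_, (Sym2.other_spec hvz).symm⟩
    exact ⟨j, mem_filter.2 ⟨mem_univ _, (mem_iff j).2 ⟨Sym2.mk_isDiag_iff.not.1 hz,
      (mem_filter.1 hwz).2⟩⟩, rfl⟩

theorem card_le_choose_card_of_forall_mem {F : Finset {z : Sym2 V // ¬z.IsDiag}} {W : Finset V}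
    (hW : ∀ z ∈ F, ∀ a ∈ z.1, a ∈ W) : #F ≤ (#W).choose 2 := by
  rw [← Sym2.card_image_offDiag]
  refine card_le_card_of_injOn Subtype.val (fun z hz => ?_) Subtype.val_injective.injOn
  obtain ⟨z, hdiag⟩ := z
  induction z using Sym2.ind with
  | h a b =>
    exact mem_image.2 ⟨(a, b), mem_offDiag.2 ⟨hW _ hz a (Sym2.mem_mk_left a b),
      hW _ hz b (Sym2.mem_mk_right a b), Sym2.mk_isDiag_iff.not.1 hdiag⟩, rfl⟩

theorem card_filter_sigma_fst_mem [Fintype V] (s : V → ℕ) (W : Finset V) :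
    #{x : Σ v, Fin (s v) | x.1 ∈ W} = ∑ v ∈ W, s v := by
  have : ({x | x.1 ∈ W} : Finset (Σ v, Fin (s v))) = W.sigma fun _ => univ := by
    ext; simp
  simp [this, card_sigma]

theorem exists_winner_card_eq [Fintype V] {s : V → ℕ}
    (hsub : ∀ A : Finset V, (#A).choose 2 ≤ ∑ v ∈ A, s v)
    (htot : ∑ v, s v = (Fintype.card V).choose 2) :
    ∃ w : {z : Sym2 V // ¬z.IsDiag} → V, (∀ z, w z ∈ z.1) ∧ ∀ v, #{z | w z = v} = s v := by
  let slots (z : {z : Sym2 V // ¬z.IsDiag}) : Finset (Σ v, Fin (s v)) := {x | x.1 ∈ z.1}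
  have hall (F : Finset {z : Sym2 V // ¬z.IsDiag}) : #F ≤ #(F.biUnion slots) := by
    let W : Finset V := F.biUnion fun z => {a | a ∈ z.1}
    have hW : F.biUnion slots = ({x | x.1 ∈ W} : Finset (Σ v, Fin (s v))) := by
      ext; simp [slots, W]
    rw [hW, card_filter_sigma_fst_mem]
    exact (card_le_choose_card_of_forall_mem fun z hz a ha =>
      mem_biUnion.2 ⟨z, hz, by simpa using ha⟩).trans (hsub W)
  obtain ⟨f, hf, hf_mem⟩ := (all_card_le_biUnion_card_iff_exists_injective slots).1 hall
  have hbij : Function.Bijective f := (Fintype.bijective_iff_injective_and_card f).2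
    ⟨hf, by simp only [Sym2.card_subtype_not_diag, Fintype.card_sigma, Fintype.card_fin, htot]⟩
  refine ⟨fun z => (f z).1, fun z => by simpa [slots] using hf_mem z, fun v => ?_⟩
  rw [card_equiv (Equiv.ofBijective f hbij)
    (t := ({x | x.1 ∈ ({v} : Finset V)} : Finset (Σ v, Fin (s v)))) (by simp),
    card_filter_sigma_fst_mem, sum_singleton]

end Tournament

section Landau

variable {V : Type*} [Fintype V]

theorem exists_tournament_outdeg_comp_perm_iff (s : V → ℕ) :
    (∃ T : V → V → Bool, IsTournament T ∧ ∃ e : Equiv.Perm V, ∀ i, s i = outdeg T (e i)) ↔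
      ∃ T : V → V → Bool, IsTournament T ∧ ∀ i, outdeg T i = s i := by
  constructor
  · rintro ⟨T, hT, e, hs⟩
    exact ⟨_, hT.comp_perm e, fun i => (outdeg_comp_perm T e i).trans (hs i).symm⟩
  · rintro ⟨T, hT, hs⟩
    exact ⟨T, hT, Equiv.refl _, fun i => (hs i).symm⟩

theorem exists_tournament_outdeg_eq_iff [DecidableEq V] (s : V → ℕ) :
    (∃ T : V → V → Bool, IsTournament T ∧ ∀ v, outdeg T v = s v) ↔
      (∀ A : Finset V, (#A).choose 2 ≤ ∑ v ∈ A, s v) ∧ ∑ v, s v = (Fintype.card V).choose 2 := by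
  constructor
  · rintro ⟨T, hT, hs⟩
    obtain rfl : outdeg T = s := funext hs
    exact ⟨hT.choose_card_le_sum_outdeg, hT.sum_outdeg⟩
  · rintro ⟨hsub, htot⟩
    obtain ⟨w, hw, hcard⟩ := exists_winner_card_eq hsub htot
    exact ⟨ofWinner w, isTournament_ofWinner hw, fun v => (outdeg_ofWinner hw v).trans (hcard v)⟩

end Landau

/-- Landau's theorem: a nondecreasing sequence `s : Fin n → ℕ` is the sorted
out-degree sequence of a tournament on `n` vertices iff all prefix sums are at least
`binom k 2` and the total sum is `binom n 2`. -/
theorem landau (n : ℕ) (s : Fin n → ℕ) (hmono : Monotone s) :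
    (∃ T : Fin n → Fin n → Bool,
        (∀ i, T i i = false) ∧ (∀ i j, i ≠ j → T i j = !T j i) ∧
        ∃ e : Equiv.Perm (Fin n),
          ∀ i, s i = (Finset.univ.filter fun j => T (e i) j = true).card) ↔
      ((∀ k : ℕ, 1 ≤ k → k ≤ n →
          k.choose 2 ≤ ∑ i ∈ Finset.univ.filter (fun i : Fin n => i.val < k), s i) ∧
        ∑ i, s i = n.choose 2) := by
  rw [← forall_choose_le_sum_iff_of_monotone hmono]
  calc _ ↔ ∃ T : Fin n → Fin n → Bool, IsTournament T ∧ ∃ e : Equiv.Perm (Fin n),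
          ∀ i, s i = outdeg T (e i) := exists_congr fun _ => and_assoc.symm
    _ ↔ ∃ T : Fin n → Fin n → Bool, IsTournament T ∧ ∀ i, outdeg T i = s i :=
      exists_tournament_outdeg_comp_perm_iff s
    _ ↔ _ := by rw [exists_tournament_outdeg_eq_iff, Fintype.card_fin]
end

section
/- Let u and v be score sequences of lengths k and ℓ. Then the direct sum u ⊕ v, defined as the concatenation of u with the sequence obtained by adding k to each entry of v, is a score sequence of length k + ℓ. -/
/-!
The first `u.length` players beat every player of the second block, so each score of `v` rises
by `u.length`. Landau's inequalities `choose k 2 ≤ s₀ + ⋯ + s_{k-1}` (for all `k` up to the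
length, the last one an equality) then transfer through `choose (m + j) 2 = choose m 2 + m * j +
choose j 2`: the first summand is covered by `u`, the last by a prefix of `v`, and the middle
one by the shift.
-/

theorem Nat.add_choose_two (m n : ℕ) : (m + n).choose 2 = m.choose 2 + m * n + n.choose 2 := by
  simp [Nat.add_choose_eq, Finset.Nat.antidiagonal_succ]
  ring

section dsum

variable (u v : List ℕ)

theorem length_dsum : (dsum u v).length = u.length + v.length := by
  simp [dsum]

theorem sum_dsum : (dsum u v).sum = u.sum + v.sum + v.length * u.length := by
  simp [dsum, add_assoc]

theorem take_dsum_of_le {k : ℕ} (hk : k ≤ u.length) : (dsum u v).take k = u.take k := by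
  simp [dsum, List.take_append, Nat.sub_eq_zero_of_le hk]

theorem sum_take_length_add_dsum (j : ℕ) :
    ((dsum u v).take (u.length + j)).sum =
      u.sum + (v.take j).sum + (v.take j).length * u.length := by
  simp [dsum, List.take_append, List.take_of_length_le, ← List.map_take, add_assoc]

variable {u v}

theorem pairwise_le_dsum (hu : u.Pairwise (· ≤ ·)) (hu_le : ∀ x ∈ u, x ≤ u.length)
    (hv : v.Pairwise (· ≤ ·)) : (dsum u v).Pairwise (· ≤ ·) := by
  refine List.pairwise_append.2 ⟨hu, hv.map _ fun _ _ h => by omega, ?_⟩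
  simp only [List.mem_map]
  rintro x hx _ ⟨y, -, rfl⟩
  exact (hu_le x hx).trans (Nat.le_add_left _ _)

theorem forall_lt_length_dsum (hu : ∀ x ∈ u, x < u.length) (hv : ∀ y ∈ v, y < v.length) :
    ∀ x ∈ dsum u v, x < (dsum u v).length := by
  simp only [dsum, List.mem_append, List.mem_map, List.length_append, List.length_map]
  rintro x (hx | ⟨y, hy, rfl⟩)
  · exact (hu x hx).trans_le (Nat.le_add_right _ _)
  · have := hv y hy
    omega

theorem choose_two_le_sum_take_dsum
    (hu : ∀ k ≤ u.length, k.choose 2 ≤ (u.take k).sum)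
    (hv : ∀ k ≤ v.length, k.choose 2 ≤ (v.take k).sum) :
    ∀ k ≤ (dsum u v).length, k.choose 2 ≤ ((dsum u v).take k).sum := by
  intro k hk
  rcases le_or_gt k u.length with hku | hku
  · rw [take_dsum_of_le u v hku]
    exact hu k hku
  obtain ⟨j, rfl⟩ := Nat.exists_eq_add_of_le hku.le
  have hj : j ≤ v.length := by
    rw [length_dsum] at hk
    omega
  have hu_sum : u.length.choose 2 ≤ u.sum := by
    simpa using hu u.length le_rfl
  rw [sum_take_length_add_dsum, List.length_take_of_le hj, Nat.add_choose_two]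
  have := hv j hj
  linarith [Nat.mul_comm j u.length]

theorem sum_dsum_eq_choose_two (hu : u.sum = u.length.choose 2) (hv : v.sum = v.length.choose 2) :
    (dsum u v).sum = (dsum u v).length.choose 2 := by
  rw [sum_dsum, length_dsum, Nat.add_choose_two, hu, hv]
  ring

end dsum

theorem IsScoreSeq.choose_two_le_sum_take_s18 {s : List ℕ} (hs : IsScoreSeq s) :
    ∀ k ≤ s.length, k.choose 2 ≤ (s.take k).sum := by
  intro k hk
  rcases Nat.eq_zero_or_pos k with rfl | hk0
  · simp
  rcases hk.lt_or_eq with hlt | rfl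
  · exact hs.2.2.1 k hk0 hlt
  · simp [hs.2.2.2]

/-- The direct sum of two score sequences is a score sequence. -/
theorem dsum_isScoreSeq (u v : List ℕ) (hu : IsScoreSeq u) (hv : IsScoreSeq v) :
    IsScoreSeq (dsum u v) ∧ (dsum u v).length = u.length + v.length := by
  have hprefix := choose_two_le_sum_take_dsum hu.choose_two_le_sum_take_s18 hv.choose_two_le_sum_take_s18
  obtain ⟨hu_sorted, hu_lt, -, hu_sum⟩ := hu
  obtain ⟨hv_sorted, hv_lt, -, hv_sum⟩ := hv
  exact ⟨⟨pairwise_le_dsum hu_sorted (fun x hx => (hu_lt x hx).le) hv_sorted,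
    forall_lt_length_dsum hu_lt hv_lt, fun k _ hk => hprefix k hk.le,
    sum_dsum_eq_choose_two hu_sum hv_sum⟩, length_dsum u v⟩
end
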